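/- arXiv:2504.07391 — 7 statements merged into one kernel-verified Lean document; each statement's English description precedes it below -/
import Mathlib

section
/- Let T > 0, let 0 < β ≤ 1, and let u ∈ C^{0,β}([0,T]) with Hölder seminorm [u]_{C^{0,β}[0,T]}. Fix N ∈ ℕ, τ = T/N, t_j = jτ, and let j be an integer with 1 ≤ j and j+1 ≤ N. Then for every s ∈ [t_{j-1}, t_{j+1}], |u(s) − Π_{2,j}u(s)| ≤ [ (2^{β−1} + 2)(t_{j+1} − s) τ^{β−1} + (t_{j+1} − s)^β ] · [u]_{C^{0,β}[0,T]}. -/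
/-!
The three Lagrange basis polynomials sum to one, so `u s - Π_{2,j} u s` is the combination of the
increments `u s - u t_i` with the basis values at `s` as weights. Each increment is bounded by the
Hölder estimate, and each weight carries a factor `t_{j+1} - s` except the one multiplying
`u s - u t_{j+1}`, whose increment supplies `(t_{j+1} - s) ^ β` instead.
-/

open Set

/-- `M` is a Hölder bound (with exponent `β`) for `u` on `[0, T]`, i.e.
`[u]_{C^{0,β}[0,T]} ≤ M`; used with the least such `M`, it encodes the Hölder seminorm. -/
def holderBnd (T β M : ℝ) (u : ℝ → ℝ) : Prop :=
  ∀ x ∈ Set.Icc (0:ℝ) T, ∀ y ∈ Set.Icc (0:ℝ) T, |u x - u y| ≤ M * |x - y| ^ β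

/-- The quadratic Lagrange interpolant `Π_{2,j} u` of `u` at the nodes
`t_{j-1} = (j-1)τ`, `t_j = jτ`, `t_{j+1} = (j+1)τ`. -/
noncomputable def Pi2 (τ : ℝ) (u : ℝ → ℝ) (j : ℕ) (s : ℝ) : ℝ :=
  (s - (j:ℝ)*τ) * (s - ((j:ℝ)+1)*τ) / (2*τ^2) * u (((j:ℝ)-1)*τ)
  - (s - ((j:ℝ)-1)*τ) * (s - ((j:ℝ)+1)*τ) / τ^2 * u ((j:ℝ)*τ)
  + (s - ((j:ℝ)-1)*τ) * (s - (j:ℝ)*τ) / (2*τ^2) * u (((j:ℝ)+1)*τ)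

open Real

lemma abs_mul_le_of_abs_le {a b A B : ℝ} (ha : |a| ≤ A) (hb : |b| ≤ B) : |a * b| ≤ A * B :=
  abs_mul a b ▸ mul_le_mul ha hb (abs_nonneg b) ((abs_nonneg a).trans ha)

lemma sub_Pi2_eq {τ : ℝ} (hτ : τ ≠ 0) (u : ℝ → ℝ) (j : ℕ) (x : ℝ) :
    u (((j:ℝ)-1)*τ + x) - Pi2 τ u j (((j:ℝ)-1)*τ + x) =
      (x - τ) * (x - 2 * τ) / (2 * τ ^ 2) * (u (((j:ℝ)-1)*τ + x) - u (((j:ℝ)-1)*τ))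
      - x * (x - 2 * τ) / τ ^ 2 * (u (((j:ℝ)-1)*τ + x) - u ((j:ℝ)*τ))
      + x * (x - τ) / (2 * τ ^ 2) * (u (((j:ℝ)-1)*τ + x) - u (((j:ℝ)+1)*τ)) := by
  unfold Pi2
  field_simp
  ring

lemma abs_quadratic_lagrange_combination_le {τ β M x δ₀ δ₁ δ₂ : ℝ} (hτ : 0 < τ) (hβ : 0 < β) (hM : 0 ≤ M)
    (hx : x ∈ Icc 0 (2 * τ)) (h₀ : |δ₀| ≤ M * |x| ^ β) (h₁ : |δ₁| ≤ M * |x - τ| ^ β)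
    (h₂ : |δ₂| ≤ M * |x - 2 * τ| ^ β) :
    |(x - τ) * (x - 2 * τ) / (2 * τ ^ 2) * δ₀ - x * (x - 2 * τ) / τ ^ 2 * δ₁
        + x * (x - τ) / (2 * τ ^ 2) * δ₂|
      ≤ ((2 ^ (β - 1) + 2) * (2 * τ - x) * τ ^ (β - 1) + (2 * τ - x) ^ β) * M := by
  obtain ⟨hx0, hx2⟩ := hx
  have habs_x : |x| = x := abs_of_nonneg hx0
  have habs_x2 : |x - 2 * τ| = 2 * τ - x := by rw [abs_sub_comm, abs_of_nonneg (by linarith)]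
  have hxτ : |x - τ| ≤ τ := abs_le.2 ⟨by linarith, by linarith⟩
  have hτ2 : 0 < 2 * τ ^ 2 := by positivity
  have term₀ : |(x - τ) * (x - 2 * τ) / (2 * τ ^ 2) * δ₀|
      ≤ 2 ^ (β - 1) * (2 * τ - x) * τ ^ (β - 1) * M := by
    calc _ ≤ τ * (2 * τ - x) / (2 * τ ^ 2) * (M * (2 * τ) ^ β) := by
          refine abs_mul_le_of_abs_le ?_ (h₀.trans (by rw [habs_x]; gcongr))
          rw [abs_div, abs_mul, habs_x2, abs_of_pos hτ2]
          gcongr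
      _ = (2 * τ - x) * M * ((2 * τ) ^ β / (2 * τ)) := by field_simp
      _ = _ := by rw [← rpow_sub_one (by positivity), mul_rpow zero_le_two hτ.le]; ring
  have term₁ : |x * (x - 2 * τ) / τ ^ 2 * δ₁| ≤ 2 * (2 * τ - x) * τ ^ (β - 1) * M := by
    calc _ ≤ 2 * τ * (2 * τ - x) / τ ^ 2 * (M * τ ^ β) := by
          refine abs_mul_le_of_abs_le ?_ (h₁.trans (by gcongr))
          rw [abs_div, abs_mul, habs_x, habs_x2, abs_of_pos (by positivity)]
          gcongr
      _ = _ := by rw [rpow_sub_one hτ.ne']; field_simp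
  have term₂ : |x * (x - τ) / (2 * τ ^ 2) * δ₂| ≤ (2 * τ - x) ^ β * M := by
    calc _ ≤ 2 * τ * τ / (2 * τ ^ 2) * (M * (2 * τ - x) ^ β) := by
          refine abs_mul_le_of_abs_le ?_ (habs_x2 ▸ h₂)
          rw [abs_div, abs_mul, habs_x, abs_of_pos hτ2]
          gcongr
      _ = _ := by field_simp
  calc _ ≤ |(x - τ) * (x - 2 * τ) / (2 * τ ^ 2) * δ₀| + |x * (x - 2 * τ) / τ ^ 2 * δ₁|
        + |x * (x - τ) / (2 * τ ^ 2) * δ₂| :=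
        (abs_add_le _ _).trans (add_le_add_left (abs_sub _ _) _)
    _ ≤ _ := add_le_add (add_le_add term₀ term₁) term₂
    _ = _ := by ring

theorem stmt0_general (T : ℝ) (hT : 0 < T) (β : ℝ) (hβ0 : 0 < β)
    (u : ℝ → ℝ)
    (M : ℝ) (hM0 : 0 ≤ M) (hM : holderBnd T β M u)
    (N : ℕ) (τ : ℝ) (hτ : τ = T / N)
    (j : ℕ) (hj : 1 ≤ j) (hjN : j + 1 ≤ N)
    (s : ℝ) (hs : s ∈ Set.Icc (((j:ℝ)-1)*τ) (((j:ℝ)+1)*τ)) :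
    |u s - Pi2 τ u j s| ≤
      ((2 ^ (β - 1) + 2) * (((j:ℝ)+1)*τ - s) * τ ^ (β - 1)
        + (((j:ℝ)+1)*τ - s) ^ β) * M := by
  have hN_pos : (0:ℝ) < N := by exact_mod_cast (by omega : 0 < N)
  have hτ0 : 0 < τ := hτ ▸ div_pos hT hN_pos
  have hj' : (1:ℝ) ≤ j := by exact_mod_cast hj
  have hjN' : (j:ℝ) + 1 ≤ N := by exact_mod_cast hjN
  have hsub : Icc (((j:ℝ)-1)*τ) (((j:ℝ)+1)*τ) ⊆ Icc 0 T := by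
    refine Icc_subset_Icc (mul_nonneg (by linarith) hτ0.le) ?_
    calc ((j:ℝ)+1)*τ ≤ N * τ := by gcongr
      _ = T := by rw [hτ]; field_simp
  have holder : ∀ t ∈ Icc (((j:ℝ)-1)*τ) (((j:ℝ)+1)*τ), ∀ y, s - t = y →
      |u s - u t| ≤ M * |y| ^ β := by
    rintro t ht y rfl
    exact hM s (hsub hs) t (hsub ht)
  have ht₀ : ((j:ℝ)-1)*τ ∈ Icc (((j:ℝ)-1)*τ) (((j:ℝ)+1)*τ) := ⟨le_rfl, by linarith⟩
  have ht₁ : (j:ℝ)*τ ∈ Icc (((j:ℝ)-1)*τ) (((j:ℝ)+1)*τ) := ⟨by linarith, by linarith⟩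
  have ht₂ : ((j:ℝ)+1)*τ ∈ Icc (((j:ℝ)-1)*τ) (((j:ℝ)+1)*τ) := ⟨by linarith, le_rfl⟩
  obtain ⟨x, rfl⟩ : ∃ x, s = ((j:ℝ)-1)*τ + x := ⟨s - ((j:ℝ)-1)*τ, by ring⟩
  rw [sub_Pi2_eq hτ0.ne', show ((j:ℝ)+1)*τ - (((j:ℝ)-1)*τ + x) = 2 * τ - x by ring]
  exact abs_quadratic_lagrange_combination_le hτ0 hβ0 hM0
    ⟨by linarith [hs.1], by linarith [hs.2]⟩
    (holder _ ht₀ x (by ring)) (holder _ ht₁ (x - τ) (by ring)) (holder _ ht₂ (x - 2 * τ) (by ring))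

theorem stmt0 (T : ℝ) (hT : 0 < T) (β : ℝ) (hβ0 : 0 < β) (hβ1 : β ≤ 1)
    (u : ℝ → ℝ) (hu : ContinuousOn u (Set.Icc 0 T))
    (M : ℝ) (hM0 : 0 ≤ M) (hM : holderBnd T β M u)
    (N : ℕ) (hN : 0 < N) (τ : ℝ) (hτ : τ = T / N)
    (j : ℕ) (hj : 1 ≤ j) (hjN : j + 1 ≤ N)
    (s : ℝ) (hs : s ∈ Set.Icc (((j:ℝ)-1)*τ) (((j:ℝ)+1)*τ)) :
    |u s - Pi2 τ u j s| ≤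
      ((2 ^ (β - 1) + 2) * (((j:ℝ)+1)*τ - s) * τ ^ (β - 1)
        + (((j:ℝ)+1)*τ - s) ^ β) * M :=
  stmt0_general T hT β hβ0 u M hM0 hM N τ hτ j hj hjN s hs
end

section
/- Let T > 0, let 0 < β ≤ 1, and let u ∈ C^{1,β}([0,T]). Fix N ∈ ℕ, τ = T/N, t_j = jτ, and let j be an integer with 1 ≤ j and j+1 ≤ N. Then for every s ∈ [t_{j-1}, t_{j+1}], |u(s) − Π_{2,j}u(s)| ≤ 2 (t_{j+1} − s) τ^β · [u']_{C^{0,β}[0,T]}. -/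
open Set

/-!
The error `e = u - Π_{2,j} u` vanishes at `t_{j+1}`, so by the mean value inequality it suffices
to bound `|e'|` by `2 τ^β M` on `[t_{j-1}, t_{j+1}]`. By the mean value theorem the two divided
differences of `u` are values `u'(η₁)`, `u'(η₂)` with `η₁` in the left and `η₂` in the right
cell, and `(Π_{2,j} u)'` is the affine function taking these values at the cell midpoints. For
`σ` in either cell, write `(Π_{2,j} u)'(σ) = u'(η) + μ (u'(η̃) - u'(η))` with `η` in the same
cell as `σ` and `|μ| ≤ 1/2`; then `|e'(σ)| ≤ M τ^β + M (2τ)^β / 2 ≤ 2 M τ^β`.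
-/

theorem hasDerivAt_Pi2 (u : ℝ → ℝ) (j : ℕ) {τ : ℝ} (hτ : τ ≠ 0) (x : ℝ) :
    HasDerivAt (Pi2 τ u j)
      (slope u (((j:ℝ)-1)*τ) ((j:ℝ)*τ) + (x - ((j:ℝ)-1)*τ - τ/2) / τ *
        (slope u ((j:ℝ)*τ) (((j:ℝ)+1)*τ) - slope u (((j:ℝ)-1)*τ) ((j:ℝ)*τ))) x := by
  have hX := hasDerivAt_id x
  have h₁ := (((hX.sub_const ((j:ℝ)*τ)).mul (hX.sub_const (((j:ℝ)+1)*τ))).div_const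
    (2*τ^2)).mul_const (u (((j:ℝ)-1)*τ))
  have h₂ := (((hX.sub_const (((j:ℝ)-1)*τ)).mul (hX.sub_const (((j:ℝ)+1)*τ))).div_const
    (τ^2)).mul_const (u ((j:ℝ)*τ))
  have h₃ := (((hX.sub_const (((j:ℝ)-1)*τ)).mul (hX.sub_const ((j:ℝ)*τ))).div_const
    (2*τ^2)).mul_const (u (((j:ℝ)+1)*τ))
  refine ((h₁.sub h₂).add h₃).congr_deriv ?_
  simp only [slope_def_field, id_eq]
  field_simp
  ring

theorem Pi2_right_node (u : ℝ → ℝ) (j : ℕ) {τ : ℝ} (hτ : τ ≠ 0) :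
    Pi2 τ u j (((j:ℝ)+1)*τ) = u (((j:ℝ)+1)*τ) := by
  simp only [Pi2]
  field_simp
  ring

theorem exists_mem_Ioo_eq_slope_of_hasDerivWithinAt {u u' : ℝ → ℝ} {p q : ℝ}
    (hderiv : ∀ t ∈ Icc p q, HasDerivWithinAt u (u' t) (Icc p q) t)
    {a b : ℝ} (hpa : p ≤ a) (hab : a < b) (hbq : b ≤ q) :
    ∃ η ∈ Ioo a b, u' η = slope u a b := by
  have hsub : Icc a b ⊆ Icc p q := Icc_subset_Icc hpa hbq
  rw [slope_def_field]
  refine exists_hasDerivAt_eq_slope u u' hab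
    (fun x hx => (hderiv x (hsub hx)).continuousWithinAt.mono hsub) fun x hx => ?_
  exact (hderiv x (hsub (Ioo_subset_Icc_self hx))).hasDerivAt
    (Icc_mem_nhds (hpa.trans_lt hx.1) (hx.2.trans_le hbq))

theorem rpow_two_mul_le {τ β : ℝ} (hτ : 0 ≤ τ) (hβ1 : β ≤ 1) : (2 * τ) ^ β ≤ 2 * τ ^ β := by
  rw [Real.mul_rpow zero_le_two hτ]
  gcongr
  simpa using Real.rpow_le_rpow_of_exponent_le one_le_two hβ1

namespace holderBnd

variable {T β M : ℝ} {f : ℝ → ℝ}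

theorem abs_sub_le (hf : holderBnd T β M f) (hM0 : 0 ≤ M) (hβ0 : 0 ≤ β) {x y r : ℝ}
    (hx : x ∈ Icc 0 T) (hy : y ∈ Icc 0 T) (hxy : |x - y| ≤ r) : |f x - f y| ≤ M * r ^ β :=
  (hf x hx y hy).trans <| by gcongr

theorem abs_sub_add_mul_sub_le (hf : holderBnd T β M f) (hM0 : 0 ≤ M) (hβ0 : 0 ≤ β)
    (hβ1 : β ≤ 1) {τ x y z μ : ℝ} (hτ : 0 ≤ τ) (hx : x ∈ Icc 0 T) (hy : y ∈ Icc 0 T)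
    (hz : z ∈ Icc 0 T) (hxy : |x - y| ≤ τ) (hzy : |z - y| ≤ 2 * τ) (hμ : |μ| ≤ 1 / 2) :
    |f x - (f y + μ * (f z - f y))| ≤ 2 * τ ^ β * M := by
  have hfxy := hf.abs_sub_le hM0 hβ0 hx hy hxy
  have hfzy : |f z - f y| ≤ M * (2 * τ ^ β) :=
    (hf.abs_sub_le hM0 hβ0 hz hy hzy).trans (by gcongr; exact rpow_two_mul_le hτ hβ1)
  calc |f x - (f y + μ * (f z - f y))| ≤ |f x - f y| + |μ| * |f z - f y| := by
        rw [← abs_mul, sub_add_eq_sub_sub]; exact abs_sub _ _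
    _ ≤ M * τ ^ β + 1 / 2 * (M * (2 * τ ^ β)) := by gcongr
    _ = 2 * τ ^ β * M := by ring

theorem abs_sub_lerp_le (hf : holderBnd T β M f) (hM0 : 0 ≤ M) (hβ0 : 0 ≤ β) (hβ1 : β ≤ 1)
    {τ t₀ t₁ t₂ η₁ η₂ σ : ℝ} (hτ : 0 < τ) (h₀₁ : t₁ - t₀ = τ) (h₁₂ : t₂ - t₁ = τ)
    (hsub : Icc t₀ t₂ ⊆ Icc 0 T) (hη₁ : η₁ ∈ Icc t₀ t₁) (hη₂ : η₂ ∈ Icc t₁ t₂)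
    (hσ : σ ∈ Icc t₀ t₂) :
    |f σ - (f η₁ + (σ - t₀ - τ / 2) / τ * (f η₂ - f η₁))| ≤ 2 * τ ^ β * M := by
  obtain ⟨hη₁l, hη₁r⟩ := hη₁
  obtain ⟨hη₂l, hη₂r⟩ := hη₂
  obtain ⟨hσl, hσr⟩ := hσ
  have mem : ∀ x, t₀ ≤ x → x ≤ t₂ → x ∈ Icc 0 T := fun x h₁ h₂ => hsub ⟨h₁, h₂⟩
  have hη₁T := mem η₁ hη₁l (by linarith)
  have hη₂T := mem η₂ (by linarith) hη₂r
  have hσT := mem σ hσl hσr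
  have hzy : |η₂ - η₁| ≤ 2 * τ := by rw [abs_le]; constructor <;> linarith
  rcases le_total σ t₁ with hσt₁ | hσt₁
  · refine hf.abs_sub_add_mul_sub_le hM0 hβ0 hβ1 hτ.le hσT hη₁T hη₂T ?_ hzy ?_
    · rw [abs_le]; constructor <;> linarith
    · rw [abs_le, le_div_iff₀ hτ, div_le_iff₀ hτ]; constructor <;> linarith
  · have hlerp : f η₁ + (σ - t₀ - τ / 2) / τ * (f η₂ - f η₁)
        = f η₂ + (1 - (σ - t₀ - τ / 2) / τ) * (f η₁ - f η₂) := by ring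
    rw [hlerp]
    refine hf.abs_sub_add_mul_sub_le hM0 hβ0 hβ1 hτ.le hσT hη₂T hη₁T ?_ (by rwa [abs_sub_comm]) ?_
    · rw [abs_le]; constructor <;> linarith
    · rw [one_sub_div hτ.ne', abs_le, le_div_iff₀ hτ, div_le_iff₀ hτ]; constructor <;> linarith

end holderBnd

theorem stmt1_general (T : ℝ) (hT : 0 < T) (β : ℝ) (hβ0 : 0 < β) (hβ1 : β ≤ 1)
    (u u' : ℝ → ℝ)
    (hderiv : ∀ t ∈ Set.Icc (0:ℝ) T, HasDerivWithinAt u (u' t) (Set.Icc 0 T) t)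
    (M : ℝ) (hM0 : 0 ≤ M) (hM : holderBnd T β M u')
    (N : ℕ) (τ : ℝ) (hτ : τ = T / N)
    (j : ℕ) (hj : 1 ≤ j) (hjN : j + 1 ≤ N)
    (s : ℝ) (hs : s ∈ Set.Icc (((j:ℝ)-1)*τ) (((j:ℝ)+1)*τ)) :
    |u s - Pi2 τ u j s| ≤ 2 * (((j:ℝ)+1)*τ - s) * τ ^ β * M := by
  set t₀ := ((j:ℝ)-1)*τ
  set t₁ := (j:ℝ)*τ
  set t₂ := ((j:ℝ)+1)*τ
  have hN : (0:ℝ) < N := by exact_mod_cast (by omega : 0 < N)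
  have hτ0 : 0 < τ := by rw [hτ]; exact div_pos hT hN
  have ht₀ : 0 ≤ t₀ := mul_nonneg (by simpa using (Nat.one_le_cast (α := ℝ)).2 hj) hτ0.le
  have ht₂ : t₂ ≤ T := by
    have hNτ : (N:ℝ) * τ = T := by rw [hτ]; field_simp
    rw [← hNτ]
    exact mul_le_mul_of_nonneg_right (by exact_mod_cast hjN) hτ0.le
  have hsub : Icc t₀ t₂ ⊆ Icc 0 T := Icc_subset_Icc ht₀ ht₂
  have h₀₁ : t₁ - t₀ = τ := by ring
  have h₁₂ : t₂ - t₁ = τ := by ring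
  obtain ⟨η₁, hη₁, hslope₁⟩ :=
    exists_mem_Ioo_eq_slope_of_hasDerivWithinAt (b := t₁) hderiv ht₀ (by linarith) (by linarith)
  obtain ⟨η₂, hη₂, hslope₂⟩ :=
    exists_mem_Ioo_eq_slope_of_hasDerivWithinAt (a := t₁) hderiv (by linarith) (by linarith) ht₂
  have herr : ∀ x ∈ Icc t₀ t₂, HasDerivWithinAt (fun y => u y - Pi2 τ u j y)
      (u' x - (u' η₁ + (x - t₀ - τ / 2) / τ * (u' η₂ - u' η₁))) (Icc t₀ t₂) x := by
    intro x hx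
    rw [hslope₁, hslope₂]
    exact ((hderiv x (hsub hx)).mono hsub).sub (hasDerivAt_Pi2 u j hτ0.ne' x).hasDerivWithinAt
  have hbound : ∀ x ∈ Icc t₀ t₂,
      ‖u' x - (u' η₁ + (x - t₀ - τ / 2) / τ * (u' η₂ - u' η₁))‖ ≤ 2 * τ ^ β * M :=
    fun x hx => hM.abs_sub_lerp_le hM0 hβ0.le hβ1 hτ0 h₀₁ h₁₂ hsub
      (Ioo_subset_Icc_self hη₁) (Ioo_subset_Icc_self hη₂) hx
  have hmvt := Convex.norm_image_sub_le_of_norm_hasDerivWithin_le herr hbound (convex_Icc t₀ t₂)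
    (right_mem_Icc.2 (by linarith)) hs
  rw [Pi2_right_node u j hτ0.ne', sub_self, sub_zero, Real.norm_eq_abs, Real.norm_eq_abs,
    abs_sub_comm s, abs_of_nonneg (sub_nonneg.2 hs.2)] at hmvt
  exact hmvt.trans_eq (by ring)

theorem stmt1 (T : ℝ) (hT : 0 < T) (β : ℝ) (hβ0 : 0 < β) (hβ1 : β ≤ 1)
    (u u' : ℝ → ℝ)
    (hderiv : ∀ t ∈ Set.Icc (0:ℝ) T, HasDerivWithinAt u (u' t) (Set.Icc 0 T) t)
    (hu' : ContinuousOn u' (Set.Icc 0 T))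
    (M : ℝ) (hM0 : 0 ≤ M) (hM : holderBnd T β M u')
    (N : ℕ) (hN : 0 < N) (τ : ℝ) (hτ : τ = T / N)
    (j : ℕ) (hj : 1 ≤ j) (hjN : j + 1 ≤ N)
    (s : ℝ) (hs : s ∈ Set.Icc (((j:ℝ)-1)*τ) (((j:ℝ)+1)*τ)) :
    |u s - Pi2 τ u j s| ≤ 2 * (((j:ℝ)+1)*τ - s) * τ ^ β * M :=
  stmt1_general T hT β hβ0 hβ1 u u' hderiv M hM0 hM N τ hτ j hj hjN s hs
end

section
/- Let T > 0, let 0 < β ≤ 1, and let u ∈ C^{2,β}([0,T]). Fix N ∈ ℕ, τ = T/N, t_j = jτ, and let j be an integer with 1 ≤ j and j+1 ≤ N. Then for every s ∈ [t_{j-1}, t_{j+1}], |u(s) − Π_{2,j}u(s)| ≤ (2^{β+1} + 2)(t_{j+1} − s) τ^{β+1} · [u'']_{C^{0,β}[0,T]}. -/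
open Set

/-! The interpolant `Π_{2,j}` reproduces quadratics, so `u(s) - Π_{2,j}u(s)` is the interpolant of
`P - u`, where `P` is the second-order Taylor polynomial of `u` at `s`. The Hölder bound on `u''`
gives `|u(t) - P(t)| ≤ (M/2) |t - s|^β (t - s)² ≤ (M/2) (2τ)^β (t - s)²` at the three nodes, and the
Lagrange weights satisfy `Σᵢ |ℓᵢ(s)| (tᵢ - s)² ≤ 4τ (t_{j+1} - s)`. -/

theorem abs_sub_le_of_abs_hasDerivWithinAt_le_mul_abs_sub {f f' : ℝ → ℝ} {a b C : ℝ}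
    (hf : ∀ x ∈ uIcc a b, HasDerivWithinAt f (f' x) (uIcc a b) x)
    (hbound : ∀ x ∈ uIcc a b, |f' x| ≤ C * |x - a|) :
    |f b - f a| ≤ C / 2 * (b - a) ^ 2 := by
  suffices key : ∀ ε : ℝ, |ε| ≤ 1 → ε * (f b - f a) ≤ C / 2 * (b - a) ^ 2 by
    have h₁ := key 1 (by norm_num)
    have h₂ := key (-1) (by norm_num)
    exact abs_le.2 ⟨by linarith, by linarith⟩
  intro ε hε
  -- `g` decreases up to `a` and increases after it
  set g : ℝ → ℝ := fun x ↦ C / 2 * (x - a) ^ 2 - ε * f x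
  have hg : ∀ x ∈ uIcc a b, HasDerivWithinAt g (C * (x - a) - ε * f' x) (uIcc a b) x := by
    intro x hx
    have hq : HasDerivAt (fun y ↦ C / 2 * (y - a) ^ 2) (C * (x - a)) x := by
      refine ((((hasDerivAt_id' x).sub_const a).fun_pow 2).const_mul (C / 2)).congr_deriv ?_
      norm_num
      ring
    exact hq.hasDerivWithinAt.sub ((hf x hx).const_mul ε)
  have hgcont : ContinuousOn g (uIcc a b) := fun x hx ↦ (hg x hx).continuousWithinAt
  have hg' : ∀ x ∈ interior (uIcc a b),
      HasDerivWithinAt g (C * (x - a) - ε * f' x) (interior (uIcc a b)) x :=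
    fun x hx ↦ (hg x (interior_subset hx)).mono interior_subset
  have hεf' : ∀ x ∈ uIcc a b, |ε * f' x| ≤ C * |x - a| := fun x hx ↦ by
    rw [abs_mul]
    exact (mul_le_of_le_one_left (abs_nonneg _) hε).trans (hbound x hx)
  have hga : g a ≤ g b := by
    rcases le_total a b with hab | hba
    · refine monotoneOn_of_hasDerivWithinAt_nonneg (convex_uIcc a b) hgcont hg' (fun x hx ↦ ?_)
        left_mem_uIcc right_mem_uIcc hab
      have hx := interior_subset hx
      have := hεf' x hx
      rw [uIcc_of_le hab] at hx
      rw [abs_of_nonneg (sub_nonneg.2 hx.1)] at this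
      linarith [le_abs_self (ε * f' x)]
    · refine antitoneOn_of_hasDerivWithinAt_nonpos (convex_uIcc a b) hgcont hg' (fun x hx ↦ ?_)
        right_mem_uIcc left_mem_uIcc hba
      have hx := interior_subset hx
      have := hεf' x hx
      rw [uIcc_of_ge hba] at hx
      rw [abs_of_nonpos (sub_nonpos.2 hx.2)] at this
      linarith [neg_abs_le (ε * f' x)]
  simp only [g, sub_self] at hga
  linarith

theorem abs_sub_taylor_le_of_abs_sub_le {u u' u'' : ℝ → ℝ} {s t C : ℝ}
    (hu : ∀ x ∈ uIcc s t, HasDerivWithinAt u (u' x) (uIcc s t) x)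
    (hu' : ∀ x ∈ uIcc s t, HasDerivWithinAt u' (u'' x) (uIcc s t) x)
    (hC : ∀ x ∈ uIcc s t, |u'' x - u'' s| ≤ C) :
    |u t - (u s + u' s * (t - s) + u'' s / 2 * (t - s) ^ 2)| ≤ C / 2 * (t - s) ^ 2 := by
  have hu'_lin : ∀ x ∈ uIcc s t, |u' x - u' s - u'' s * (x - s)| ≤ C * |x - s| := by
    intro x hx
    have hd : ∀ y ∈ uIcc s t,
        HasDerivWithinAt (fun z ↦ u' z - u'' s * z) (u'' y - u'' s) (uIcc s t) y := fun y hy ↦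
      (hu' y hy).sub
        (((hasDerivAt_id' y).const_mul (u'' s)).hasDerivWithinAt.congr_deriv (mul_one _))
    have := Convex.norm_image_sub_le_of_norm_hasDerivWithin_le hd hC (convex_uIcc s t)
      left_mem_uIcc hx
    simp only [Real.norm_eq_abs] at this
    convert this using 2
    ring
  have hrem : ∀ x ∈ uIcc s t, HasDerivWithinAt (fun z ↦ u z - u' s * z - u'' s / 2 * (z - s) ^ 2)
      (u' x - u' s - u'' s * (x - s)) (uIcc s t) x := by
    intro x hx
    refine (((hu x hx).sub ((hasDerivAt_id' x).const_mul (u' s)).hasDerivWithinAt).sub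
      ((((hasDerivAt_id' x).sub_const s).fun_pow 2).const_mul (u'' s / 2)).hasDerivWithinAt
      ).congr_deriv ?_
    norm_num
    ring
  convert abs_sub_le_of_abs_hasDerivWithinAt_le_mul_abs_sub hrem hu'_lin using 2
  ring

theorem holderBnd.abs_sub_taylor_le {T β M : ℝ} {u u' u'' : ℝ → ℝ} (hβ : 0 ≤ β) (hM0 : 0 ≤ M)
    (hM : holderBnd T β M u'')
    (hu : ∀ x ∈ Icc 0 T, HasDerivWithinAt u (u' x) (Icc 0 T) x)
    (hu' : ∀ x ∈ Icc 0 T, HasDerivWithinAt u' (u'' x) (Icc 0 T) x)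
    {s t : ℝ} (hs : s ∈ Icc 0 T) (ht : t ∈ Icc 0 T) :
    |u t - (u s + u' s * (t - s) + u'' s / 2 * (t - s) ^ 2)| ≤
      M / 2 * |t - s| ^ β * (t - s) ^ 2 := by
  have hsub : uIcc s t ⊆ Icc 0 T := ordConnected_Icc.uIcc_subset hs ht
  have := abs_sub_taylor_le_of_abs_sub_le (C := M * |t - s| ^ β)
    (fun x hx ↦ (hu x (hsub hx)).mono hsub) (fun x hx ↦ (hu' x (hsub hx)).mono hsub)
    (fun x hx ↦ (hM x (hsub hx) s hs).trans (mul_le_mul_of_nonneg_left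
      (Real.rpow_le_rpow (abs_nonneg _) (abs_sub_left_of_mem_uIcc hx) hβ) hM0))
  linarith

theorem Pi2_sub (τ : ℝ) (u v : ℝ → ℝ) (j : ℕ) (s : ℝ) :
    Pi2 τ u j s - Pi2 τ v j s = Pi2 τ (fun x ↦ u x - v x) j s := by
  unfold Pi2
  ring

theorem Pi2_quadratic {τ : ℝ} (hτ : τ ≠ 0) (a b c x₀ : ℝ) (j : ℕ) (s : ℝ) :
    Pi2 τ (fun x ↦ a + b * (x - x₀) + c * (x - x₀) ^ 2) j s =
      a + b * (s - x₀) + c * (s - x₀) ^ 2 := by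
  unfold Pi2
  field_simp
  ring

/-- With `x = s - t_j`, the left side is `Σᵢ |ℓᵢ(s)| (tᵢ - s)²` for the Lagrange basis `ℓᵢ` of
`Π_{2,j}`. -/
theorem lagrange_weights_mul_sq_le {τ x : ℝ} (hτ : 0 < τ) (hx : |x| ≤ τ) :
    |x * (x - τ)| / (2 * τ ^ 2) * (x + τ) ^ 2 + (x + τ) * (τ - x) / τ ^ 2 * x ^ 2
      + |(x + τ) * x| / (2 * τ ^ 2) * (x - τ) ^ 2 ≤ 4 * τ * (τ - x) := by
  obtain ⟨hxl, hxr⟩ := abs_le.1 hx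
  rw [abs_mul, abs_mul, abs_of_nonpos (by linarith : x - τ ≤ 0),
    abs_of_nonneg (by linarith : 0 ≤ x + τ), ← sq_abs x]
  calc _ = (τ - x) * ((τ + x) * |x| * (τ + |x|)) / τ ^ 2 := by
        field_simp
        ring
    _ ≤ (τ - x) * (2 * τ * τ * (2 * τ)) / τ ^ 2 := by
        gcongr <;> linarith
    _ = 4 * τ * (τ - x) := by
        field_simp
        ring

theorem abs_Pi2_le_of_abs_le_mul_sq {τ K s : ℝ} {w : ℝ → ℝ} {j : ℕ} (hτ : 0 < τ) (hK : 0 ≤ K)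
    (hs : s ∈ Icc (((j : ℝ) - 1) * τ) (((j : ℝ) + 1) * τ))
    (hw : ∀ t ∈ Icc (((j : ℝ) - 1) * τ) (((j : ℝ) + 1) * τ), |w t| ≤ K * (t - s) ^ 2) :
    |Pi2 τ w j s| ≤ 4 * K * τ * (((j : ℝ) + 1) * τ - s) := by
  set x := s - j * τ with hx
  have hxτ : |x| ≤ τ := abs_le.2 ⟨by linarith [hs.1], by linarith [hs.2]⟩
  have hPi : Pi2 τ w j s = x * (x - τ) / (2 * τ ^ 2) * w ((j - 1) * τ)
      + (x + τ) * (τ - x) / τ ^ 2 * w (j * τ) + (x + τ) * x / (2 * τ ^ 2) * w ((j + 1) * τ) := by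
    simp only [Pi2, hx]
    ring
  have hleft : |w ((j - 1) * τ)| ≤ K * (x + τ) ^ 2 :=
    (hw _ ⟨le_rfl, by linarith⟩).trans_eq (by ring)
  have hmid : |w (j * τ)| ≤ K * x ^ 2 :=
    (hw _ ⟨by linarith, by linarith⟩).trans_eq (by ring)
  have hright : |w ((j + 1) * τ)| ≤ K * (x - τ) ^ 2 :=
    (hw _ ⟨by linarith, le_rfl⟩).trans_eq (by ring)
  have hmid_nonneg : 0 ≤ (x + τ) * (τ - x) := by
    obtain ⟨hxl, hxr⟩ := abs_le.1 hxτ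
    exact mul_nonneg (by linarith) (by linarith)
  calc |Pi2 τ w j s|
      ≤ |x * (x - τ)| / (2 * τ ^ 2) * |w ((j - 1) * τ)| + (x + τ) * (τ - x) / τ ^ 2 * |w (j * τ)|
        + |(x + τ) * x| / (2 * τ ^ 2) * |w ((j + 1) * τ)| := by
        rw [hPi]
        refine (abs_add_three _ _ _).trans_eq ?_
        simp only [abs_mul (_ / _), abs_div, abs_of_pos (by positivity : (0 : ℝ) < 2 * τ ^ 2),
          abs_of_pos (by positivity : (0 : ℝ) < τ ^ 2), abs_of_nonneg hmid_nonneg]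
    _ ≤ |x * (x - τ)| / (2 * τ ^ 2) * (K * (x + τ) ^ 2) + (x + τ) * (τ - x) / τ ^ 2 * (K * x ^ 2)
        + |(x + τ) * x| / (2 * τ ^ 2) * (K * (x - τ) ^ 2) := by gcongr
    _ = K * (|x * (x - τ)| / (2 * τ ^ 2) * (x + τ) ^ 2 + (x + τ) * (τ - x) / τ ^ 2 * x ^ 2
        + |(x + τ) * x| / (2 * τ ^ 2) * (x - τ) ^ 2) := by ring
    _ ≤ K * (4 * τ * (τ - x)) := by gcongr; exact lagrange_weights_mul_sq_le hτ hxτ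
    _ = 4 * K * τ * (((j : ℝ) + 1) * τ - s) := by rw [hx]; ring

theorem stmt2_general (T : ℝ) (hT : 0 < T) (β : ℝ) (hβ0 : 0 < β)
    (u u' u'' : ℝ → ℝ)
    (hderiv : ∀ t ∈ Set.Icc (0:ℝ) T, HasDerivWithinAt u (u' t) (Set.Icc 0 T) t)
    (hderiv2 : ∀ t ∈ Set.Icc (0:ℝ) T, HasDerivWithinAt u' (u'' t) (Set.Icc 0 T) t)
    (M : ℝ) (hM0 : 0 ≤ M) (hM : holderBnd T β M u'')
    (N : ℕ) (hN : 0 < N) (τ : ℝ) (hτ : τ = T / N)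
    (j : ℕ) (hj : 1 ≤ j) (hjN : j + 1 ≤ N)
    (s : ℝ) (hs : s ∈ Set.Icc (((j:ℝ)-1)*τ) (((j:ℝ)+1)*τ)) :
    |u s - Pi2 τ u j s| ≤ (2 ^ (β + 1) + 2) * (((j:ℝ)+1)*τ - s) * τ ^ (β + 1) * M := by
  have hτ0 : 0 < τ := hτ ▸ div_pos hT (Nat.cast_pos.2 hN)
  have hsub : Icc (((j : ℝ) - 1) * τ) (((j : ℝ) + 1) * τ) ⊆ Icc 0 T := by
    have hj' : (1 : ℝ) ≤ j := Nat.one_le_cast.2 hj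
    have hjN' : (j : ℝ) + 1 ≤ N := by exact_mod_cast hjN
    have hNτ : (N : ℝ) * τ = T := by rw [hτ]; field_simp
    exact Icc_subset_Icc (by nlinarith) (by nlinarith)
  set P : ℝ → ℝ := fun t ↦ u s + u' s * (t - s) + u'' s / 2 * (t - s) ^ 2
  have herr : u s - Pi2 τ u j s = Pi2 τ (fun t ↦ P t - u t) j s := by
    rw [← Pi2_sub, Pi2_quadratic hτ0.ne']
    ring
  have hnode : ∀ t ∈ Icc (((j : ℝ) - 1) * τ) (((j : ℝ) + 1) * τ),
      |P t - u t| ≤ M / 2 * (2 * τ) ^ β * (t - s) ^ 2 := by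
    intro t ht
    rw [abs_sub_comm]
    refine (hM.abs_sub_taylor_le hβ0.le hM0 hderiv hderiv2 (hsub hs) (hsub ht)).trans ?_
    gcongr
    exact abs_le.2 ⟨by linarith [hs.2, ht.1], by linarith [hs.1, ht.2]⟩
  calc |u s - Pi2 τ u j s| ≤ 4 * (M / 2 * (2 * τ) ^ β) * τ * (((j : ℝ) + 1) * τ - s) :=
        herr ▸ abs_Pi2_le_of_abs_le_mul_sq hτ0 (by positivity) hs hnode
    _ = 2 ^ (β + 1) * (((j : ℝ) + 1) * τ - s) * τ ^ (β + 1) * M := by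
        rw [Real.mul_rpow zero_le_two hτ0.le, Real.rpow_add_one two_ne_zero,
          Real.rpow_add_one hτ0.ne']
        ring
    _ ≤ (2 ^ (β + 1) + 2) * (((j : ℝ) + 1) * τ - s) * τ ^ (β + 1) * M := by
        have : 0 ≤ ((j : ℝ) + 1) * τ - s := by linarith [hs.2]
        gcongr
        linarith

theorem stmt2 (T : ℝ) (hT : 0 < T) (β : ℝ) (hβ0 : 0 < β) (hβ1 : β ≤ 1)
    (u u' u'' : ℝ → ℝ)
    (hderiv : ∀ t ∈ Set.Icc (0:ℝ) T, HasDerivWithinAt u (u' t) (Set.Icc 0 T) t)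
    (hderiv2 : ∀ t ∈ Set.Icc (0:ℝ) T, HasDerivWithinAt u' (u'' t) (Set.Icc 0 T) t)
    (hu'' : ContinuousOn u'' (Set.Icc 0 T))
    (M : ℝ) (hM0 : 0 ≤ M) (hM : holderBnd T β M u'')
    (N : ℕ) (hN : 0 < N) (τ : ℝ) (hτ : τ = T / N)
    (j : ℕ) (hj : 1 ≤ j) (hjN : j + 1 ≤ N)
    (s : ℝ) (hs : s ∈ Set.Icc (((j:ℝ)-1)*τ) (((j:ℝ)+1)*τ)) :
    |u s - Pi2 τ u j s| ≤ (2 ^ (β + 1) + 2) * (((j:ℝ)+1)*τ - s) * τ ^ (β + 1) * M :=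
  stmt2_general T hT β hβ0 u u' u'' hderiv hderiv2 M hM0 hM N hN τ hτ j hj hjN s hs
end

section
/- Let T > 0, let 0 < α < β ≤ 1, and let u ∈ C^{0,β}([0,T]). Fix N ∈ ℕ, τ = T/N, t_j = jτ, and let n be an integer with 2 ≤ n ≤ N. Then the far-field part of the L2 truncation error integral satisfies Σ_{j=1}^{n−1} ∫_{t_{j−1}}^{t_j} |Π_{2,j}u(s) − u(s)| / (t_n − s)^{1+α} ds ≤ ((2^{β+1} + 4)(1 − n^{−α}) / α) · [u]_{C^{0,β}[0,T]} · τ^{β−α}. -/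
/-!
On `[t_{j-1}, t_j]`, write `s = t_{j-1} + θτ` with `θ ∈ [0, 1]`. Since the Lagrange basis sums
to one, `Π_{2,j}u(s) - u(s)` is a combination of the differences `u(t_i) - u(s)` with coefficients
of modulus at most `1`; the Hölder bound (with `|t_{j+1} - s| ≤ 2τ`) gives
`|Π_{2,j}u(s) - u(s)| ≤ (2 + 2^β) M τ^β`. The kernel integrals then add up to
`∫_0^{t_{n-1}} (t_n - s)^{-1-α} ds = τ^{-α} (1 - n^{-α}) / α`.
-/

open Set MeasureTheory

theorem holderBnd.abs_sub_le_s4 {T β M : ℝ} {u : ℝ → ℝ} (hu : holderBnd T β M u) (hM : 0 ≤ M)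
    (hβ : 0 ≤ β) {x y d : ℝ} (hx : x ∈ Icc 0 T) (hy : y ∈ Icc 0 T) (hxy : |x - y| ≤ d) :
    |u x - u y| ≤ M * d ^ β :=
  (hu x hx y hy).trans <| by gcongr

theorem Pi2_sub_eq (u : ℝ → ℝ) (j : ℕ) {τ : ℝ} (hτ : τ ≠ 0) (θ : ℝ) :
    Pi2 τ u j ((j - 1 + θ) * τ) - u ((j - 1 + θ) * τ) =
      (θ - 1) * (θ - 2) / 2 * (u ((j - 1) * τ) - u ((j - 1 + θ) * τ))
      - θ * (θ - 2) * (u (j * τ) - u ((j - 1 + θ) * τ))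
      + θ * (θ - 1) / 2 * (u ((j + 1) * τ) - u ((j - 1 + θ) * τ)) := by
  unfold Pi2
  field_simp
  ring

theorem abs_Pi2_sub_le {T β M τ : ℝ} {u : ℝ → ℝ} (hu : holderBnd T β M u) (hM : 0 ≤ M)
    (hβ : 0 ≤ β) (hτ : 0 < τ) {j : ℕ} (hj : 1 ≤ j) (hjT : (j + 1) * τ ≤ T) {s : ℝ}
    (hs : s ∈ Icc ((j - 1) * τ) (j * τ)) :
    |Pi2 τ u j s - u s| ≤ (2 + 2 ^ β) * M * τ ^ β := by
  have hj : (1 : ℝ) ≤ j := by exact_mod_cast hj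
  obtain ⟨hs₁, hs₂⟩ := hs
  have mem : ∀ x, (j - 1) * τ ≤ x → x ≤ (j + 1) * τ → x ∈ Icc 0 T := fun x h₁ h₂ =>
    ⟨(mul_nonneg (by linarith) hτ.le).trans h₁, h₂.trans hjT⟩
  have hs := mem s hs₁ (by linarith)
  have hA := hu.abs_sub_le_s4 hM hβ (x := (j - 1) * τ) (mem _ le_rfl (by linarith)) hs (d := τ)
    (by rw [abs_le]; constructor <;> linarith)
  have hB := hu.abs_sub_le_s4 hM hβ (x := j * τ) (mem _ (by linarith) (by linarith)) hs (d := τ)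
    (by rw [abs_le]; constructor <;> linarith)
  have hC := hu.abs_sub_le_s4 hM hβ (x := (j + 1) * τ) (mem _ (by linarith) le_rfl) hs
    (d := 2 * τ) (by rw [abs_le]; constructor <;> linarith)
  rw [Real.mul_rpow zero_le_two hτ.le] at hC
  obtain ⟨θ, ⟨hθ₀, hθ₁⟩, rfl⟩ : ∃ θ ∈ Icc (0 : ℝ) 1, s = (j - 1 + θ) * τ :=
    ⟨(s - (j - 1) * τ) / τ, ⟨div_nonneg (by linarith) hτ.le, (div_le_one hτ).2 (by linarith)⟩,
      by field_simp; ring⟩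
  have cA : |(θ - 1) * (θ - 2) / 2| ≤ 1 := by rw [abs_le]; constructor <;> nlinarith
  have cB : |θ * (θ - 2)| ≤ 1 := by rw [abs_le]; constructor <;> nlinarith
  have cC : |θ * (θ - 1) / 2| ≤ 1 := by rw [abs_le]; constructor <;> nlinarith
  rw [Pi2_sub_eq u j hτ.ne']
  calc _ ≤ |(θ - 1) * (θ - 2) / 2| * |u ((j - 1) * τ) - u ((j - 1 + θ) * τ)|
        + |θ * (θ - 2)| * |u (j * τ) - u ((j - 1 + θ) * τ)|
        + |θ * (θ - 1) / 2| * |u ((j + 1) * τ) - u ((j - 1 + θ) * τ)| := by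
        simp only [← abs_mul]
        exact (abs_add_le _ _).trans (by gcongr; exact abs_sub _ _)
    _ ≤ 1 * (M * τ ^ β) + 1 * (M * τ ^ β) + 1 * (M * (2 ^ β * τ ^ β)) := by gcongr
    _ = (2 + 2 ^ β) * M * τ ^ β := by ring

theorem integral_const_sub_rpow_neg_one_sub {a b c α : ℝ} (hα : α ≠ 0) (hab : a ≤ b) (hbc : b < c) :
    ∫ s in a..b, (c - s) ^ (-(1 + α)) = ((c - b) ^ (-α) - (c - a) ^ (-α)) / α := by
  have h0 : (0 : ℝ) ∉ uIcc (c - b) (c - a) := by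
    rw [uIcc_of_le (by linarith)]
    exact fun h => by linarith [h.1]
  rw [intervalIntegral.integral_comp_sub_left (fun x => x ^ (-(1 + α))),
    integral_rpow (Or.inr ⟨by contrapose! hα; linarith, h0⟩)]
  rw [show -(1 + α) + 1 = -α by ring, div_neg, ← neg_div, neg_sub]

theorem integral_abs_div_rpow_le {f : ℝ → ℝ} {a b c r C : ℝ} (hab : a ≤ b) (hbc : b < c)
    (hf : ∀ s ∈ Icc a b, |f s| ≤ C) :
    ∫ s in a..b, |f s| / (c - s) ^ r ≤ C * ∫ s in a..b, (c - s) ^ (-r) := by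
  have hpos : ∀ s ∈ Icc a b, 0 < c - s := fun s hs => by linarith [hs.2]
  have hint : IntegrableOn (fun s => C * (c - s) ^ (-r)) (Icc a b) :=
    (continuousOn_const.mul <| (continuousOn_const.sub continuousOn_id).rpow_const
      fun s hs => Or.inl (hpos s hs).ne').integrableOn_Icc
  rw [← intervalIntegral.integral_const_mul, intervalIntegral.integral_of_le hab,
    intervalIntegral.integral_of_le hab]
  have hmem : ∀ᵐ s ∂volume.restrict (Ioc a b), s ∈ Icc a b :=
    (ae_restrict_mem measurableSet_Ioc).mono fun s hs => Ioc_subset_Icc_self hs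
  refine integral_mono_of_nonneg (hmem.mono fun s hs => ?_) (hint.mono_set Ioc_subset_Icc_self)
    (hmem.mono fun s hs => ?_)
  · have := hpos s hs
    positivity
  · dsimp only
    rw [Real.rpow_neg (hpos s hs).le, ← div_eq_mul_inv]
    exact div_le_div_of_nonneg_right (hf s hs) (Real.rpow_nonneg (hpos s hs).le r)

theorem sum_integral_grid_eq_integral {g : ℝ → ℝ} {τ : ℝ} (hτ : 0 ≤ τ) (m : ℕ)
    (hg : IntervalIntegrable g volume 0 (m * τ)) :
    ∑ j ∈ Finset.Icc 1 m, ∫ s in ((j : ℝ) - 1) * τ..(j : ℝ) * τ, g s =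
      ∫ s in 0..(m : ℝ) * τ, g s := by
  induction m with
  | zero => simp
  | succ m ih =>
    push_cast at hg ⊢
    have hle : (m : ℝ) * τ ≤ (m + 1) * τ := by nlinarith
    have hmem : (m : ℝ) * τ ∈ uIcc 0 ((m + 1) * τ) := by
      rw [uIcc_of_le (by positivity)]
      exact ⟨by positivity, hle⟩
    have hg₁ := hg.mono_set (uIcc_subset_uIcc left_mem_uIcc hmem)
    have hg₂ := hg.mono_set (uIcc_subset_uIcc hmem right_mem_uIcc)
    rw [Finset.sum_Icc_succ_top (by omega), ih hg₁]
    push_cast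
    rw [add_sub_cancel_right, intervalIntegral.integral_add_adjacent_intervals hg₁ hg₂]

theorem integral_abs_Pi2_sub_div_rpow_le {T β M τ c r : ℝ} {u : ℝ → ℝ}
    (hu : holderBnd T β M u) (hM : 0 ≤ M) (hβ : 0 ≤ β) (hτ : 0 < τ) {j : ℕ} (hj : 1 ≤ j)
    (hjT : (j + 1) * τ ≤ T) (hjc : j * τ < c) :
    ∫ s in ((j : ℝ) - 1) * τ..(j : ℝ) * τ, |Pi2 τ u j s - u s| / (c - s) ^ r ≤
      (2 + 2 ^ β) * M * τ ^ β * ∫ s in ((j : ℝ) - 1) * τ..(j : ℝ) * τ, (c - s) ^ (-r) :=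
  integral_abs_div_rpow_le (f := fun s => Pi2 τ u j s - u s) (by linarith) hjc
    fun _ hs => abs_Pi2_sub_le hu hM hβ hτ hj hjT hs

theorem sum_integral_sub_rpow_neg_one_sub {τ α : ℝ} (hτ : 0 < τ) (hα : α ≠ 0) {n : ℕ}
    (hn : 1 ≤ n) :
    ∑ j ∈ Finset.Icc 1 (n - 1),
        ∫ s in ((j : ℝ) - 1) * τ..(j : ℝ) * τ, ((n : ℝ) * τ - s) ^ (-(1 + α)) =
      (τ ^ (-α) - ((n : ℝ) * τ) ^ (-α)) / α := by
  have hn₁ : ((n - 1 : ℕ) : ℝ) = n - 1 := by rw [Nat.cast_sub hn, Nat.cast_one]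
  have hn' : (1 : ℝ) ≤ n := by exact_mod_cast hn
  have hint : IntervalIntegrable (fun s => ((n : ℝ) * τ - s) ^ (-(1 + α))) volume 0
      (((n - 1 : ℕ) : ℝ) * τ) := by
    refine ContinuousOn.intervalIntegrable <| ContinuousOn.rpow_const (by fun_prop)
      fun s hs => Or.inl ?_
    rw [hn₁, uIcc_of_le (by nlinarith)] at hs
    linarith [hs.2]
  rw [sum_integral_grid_eq_integral hτ.le _ hint, hn₁,
    integral_const_sub_rpow_neg_one_sub hα (by nlinarith) (by linarith)]
  ring_nf

theorem stmt4_general (T : ℝ) (hT : 0 < T) (α β : ℝ) (hα : 0 < α) (hαβ : α < β)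
    (u : ℝ → ℝ)
    (M : ℝ) (hM0 : 0 ≤ M) (hM : holderBnd T β M u)
    (N : ℕ) (τ : ℝ) (hτ : τ = T / N)
    (n : ℕ) (hn : 2 ≤ n) (hnN : n ≤ N) :
    ∑ j ∈ Finset.Icc 1 (n-1),
        ∫ s in (((j:ℝ)-1)*τ)..((j:ℝ)*τ),
          |Pi2 τ u j s - u s| / ((n:ℝ)*τ - s) ^ (1+α) ≤
      (2 ^ (β + 1) + 4) * (1 - (n:ℝ) ^ (-α)) / α * M * τ ^ (β - α) := by
  have hN : (0 : ℝ) < N := by norm_cast; omega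
  have hτ0 : 0 < τ := hτ ▸ div_pos hT hN
  have hnτ : (n : ℝ) * τ ≤ T :=
    calc (n : ℝ) * τ ≤ N * τ := by gcongr
      _ = T := by rw [hτ]; field_simp
  have hnα : (n : ℝ) ^ (-α) ≤ 1 :=
    Real.rpow_le_one_of_one_le_of_nonpos (by norm_cast; omega) (by linarith)
  have hcoef : 2 + 2 ^ β ≤ (2 : ℝ) ^ (β + 1) + 4 := by
    rw [Real.rpow_add_one two_ne_zero]
    linarith [Real.rpow_nonneg zero_le_two β]
  calc _ ≤ ∑ j ∈ Finset.Icc 1 (n - 1), (2 + 2 ^ β) * M * τ ^ β *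
        ∫ s in ((j : ℝ) - 1) * τ..(j : ℝ) * τ, ((n : ℝ) * τ - s) ^ (-(1 + α)) := by
        refine Finset.sum_le_sum fun j hj => ?_
        obtain ⟨hj₁, hj₂⟩ := Finset.mem_Icc.1 hj
        have hjn : (j : ℝ) + 1 ≤ n := by norm_cast; omega
        exact integral_abs_Pi2_sub_div_rpow_le hM hM0 (by linarith) hτ0 hj₁ (by nlinarith)
          (by nlinarith)
    _ = (2 + 2 ^ β) * (1 - (n : ℝ) ^ (-α)) / α * M * τ ^ (β - α) := by
        rw [← Finset.mul_sum, sum_integral_sub_rpow_neg_one_sub hτ0 hα.ne' (by omega),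
          Real.mul_rpow (by positivity) hτ0.le, Real.rpow_sub hτ0, Real.rpow_neg hτ0.le]
        field_simp
    _ ≤ _ := by
        have : 0 ≤ 1 - (n : ℝ) ^ (-α) := by linarith
        gcongr ?_ * _ / _ * _ * _

theorem stmt4 (T : ℝ) (hT : 0 < T) (α β : ℝ) (hα : 0 < α) (hαβ : α < β) (hβ1 : β ≤ 1)
    (u : ℝ → ℝ) (hu : ContinuousOn u (Set.Icc 0 T))
    (M : ℝ) (hM0 : 0 ≤ M) (hM : holderBnd T β M u)
    (N : ℕ) (hN : 0 < N) (τ : ℝ) (hτ : τ = T / N)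
    (n : ℕ) (hn : 2 ≤ n) (hnN : n ≤ N) :
    ∑ j ∈ Finset.Icc 1 (n-1),
        ∫ s in (((j:ℝ)-1)*τ)..((j:ℝ)*τ),
          |Pi2 τ u j s - u s| / ((n:ℝ)*τ - s) ^ (1+α) ≤
      (2 ^ (β + 1) + 4) * (1 - (n:ℝ) ^ (-α)) / α * M * τ ^ (β - α) :=
  stmt4_general T hT α β hα hαβ u M hM0 hM N τ hτ n hn hnN
end

section
/- Let T > 0, 0 < α < 1, 0 < β ≤ 1, and let u ∈ C^{1,β}([0,T]). Fix N ∈ ℕ, τ = T/N, t_j = jτ, and let n be an integer with 2 ≤ n ≤ N. Then the L2 scheme satisfies |D_t^α u(t_n) − δ_τ^α u(t_n)| ≤ (α/Γ(1−α)) · ( 4(1 − n^{−α})/α + 2/(1−α) ) · [u']_{C^{0,β}[0,T]} · τ^{1+β−α}. -/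
/-
Since `P^n u` interpolates `u` at `0` and `t_n`, the consistency error is
`(α/Γ(1-α)) ∫_0^{t_n} (P^n u - u)(s) / (t_n - s)^{α+1} ds`. Written in Newton form, the
interpolation error is a combination of cross differences
`(w - z)(u y - u x) - (y - x)(u w - u z)`, which the mean value theorem and the Hölder bound on
`u'` control by `M ℓ^β (y - x)(w - z)`. This gives `|P^n u - u| ≤ 2Mτ^{1+β}` on `[0, t_{n-1}]`
and `|P^n u - u| ≤ 2Mτ^β (t_n - s)` on the last step, where the extrapolated `Π_{2,n-1} u` still
interpolates at `t_n`; the second bound vanishes at `t_n` and so absorbs one power of the kernel.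
Integrating both against `(t_n - s)^{-α-1}` gives `2Mτ^{1+β-α} ((1 - n^{-α})/α + 1/(1 - α))`.
-/

open Set MeasureTheory

/-- The Caputo fractional derivative of order `α` in integrated form:
`D_t^α u(t) = (1/Γ(1-α)) (u(t)-u(0))/t^α + (α/Γ(1-α)) ∫_0^t (u(t)-u(s))/(t-s)^{α+1} ds`. -/
noncomputable def caputo (α : ℝ) (u : ℝ → ℝ) (t : ℝ) : ℝ :=
  (1 / Real.Gamma (1 - α)) * (u t - u 0) / t ^ α
    + (α / Real.Gamma (1 - α)) * ∫ s in (0:ℝ)..t, (u t - u s) / (t - s) ^ (α + 1)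

/-- The piecewise interpolant `P^n u` of the L2 scheme: it equals `Π_{2,j} u` on
`(t_{j-1}, t_j)` for `1 ≤ j ≤ n-1` and `Π_{2,n-1} u` on `(t_{n-1}, t_n)`.
(For `s ∈ (t_{j-1}, t_j)` one has `⌈s/τ⌉ = j`.) -/
noncomputable def L2interp (τ : ℝ) (u : ℝ → ℝ) (n : ℕ) (s : ℝ) : ℝ :=
  if ((n:ℝ)-1)*τ < s then Pi2 τ u (n-1) s else Pi2 τ u ⌈s/τ⌉₊ s

/-- The L2 approximation `δ_τ^α u(t_n) = D_t^α (P^n u)(t_n)` of the Caputo derivative. -/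
noncomputable def L2approx (α τ : ℝ) (u : ℝ → ℝ) (n : ℕ) : ℝ :=
  caputo α (L2interp τ u n) ((n:ℝ)*τ)

open intervalIntegral Real

theorem integral_sub_rpow {r : ℝ} (t a b : ℝ)
    (h : -1 < r ∨ r ≠ -1 ∧ (0:ℝ) ∉ uIcc (t - b) (t - a)) :
    ∫ s in a..b, (t - s) ^ r = ((t - a) ^ (r + 1) - (t - b) ^ (r + 1)) / (r + 1) := by
  rw [integral_comp_sub_left (fun x => x ^ r), integral_rpow h]

theorem abs_div_rpow_add_one_le {a C x γ : ℝ} (hC : 0 ≤ C) (hx : 0 ≤ x) (ha : |a| ≤ C * x) :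
    |a / x ^ (γ + 1)| ≤ C * x ^ (-γ) := by
  rcases hx.eq_or_lt with rfl | hx
  · have : a = 0 := abs_nonpos_iff.mp (by simpa using ha)
    simp only [this, zero_div, abs_zero]
    positivity
  · rw [abs_div, abs_of_pos (rpow_pos_of_pos hx _), div_le_iff₀ (rpow_pos_of_pos hx _), mul_assoc,
      ← rpow_add hx, neg_add_cancel_left, rpow_one]
    exact ha

theorem intervalIntegrable_and_abs_integral_le {f g : ℝ → ℝ} {a b : ℝ} (hab : a ≤ b)
    (hf : AEStronglyMeasurable f (volume.restrict (Ioc a b))) (hg : IntervalIntegrable g volume a b)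
    (hfg : ∀ s ∈ Ioc a b, |f s| ≤ g s) :
    IntervalIntegrable f volume a b ∧ |∫ s in a..b, f s| ≤ ∫ s in a..b, g s := by
  refine ⟨hg.mono_fun' (by rwa [uIoc_of_le hab]) ?_, ?_⟩
  · rw [uIoc_of_le hab]
    exact (ae_restrict_iff' measurableSet_Ioc).2 (ae_of_all _ hfg)
  · simpa only [Real.norm_eq_abs] using
      norm_integral_le_of_norm_le hab
        (ae_of_all _ fun s hs => (Real.norm_eq_abs (f s)).trans_le (hfg s hs)) hg

theorem abs_integral_le_of_two_scale_bound {e : ℝ → ℝ} {t τ α K : ℝ} (hτ : 0 < τ) (hτt : τ ≤ t)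
    (hα0 : 0 < α) (hα1 : α < 1) (he : AEStronglyMeasurable e (volume.restrict (Ioc 0 t)))
    (h₁ : ∀ s ∈ Ioc 0 (t - τ), |e s| ≤ K * τ * (t - s) ^ (-(α + 1)))
    (h₂ : ∀ s ∈ Ioc (t - τ) t, |e s| ≤ K * (t - s) ^ (-α)) :
    IntervalIntegrable e volume 0 t ∧
      |∫ s in 0..t, e s| ≤ K * τ * ((τ ^ (-α) - t ^ (-α)) / α) + K * (τ ^ (1 - α) / (1 - α)) := by
  have hmeas : ∀ {a b}, 0 ≤ a → b ≤ t → AEStronglyMeasurable e (volume.restrict (Ioc a b)) :=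
    fun ha hb => he.mono_measure (Measure.restrict_mono (Ioc_subset_Ioc ha hb) le_rfl)
  have hg₁ : IntervalIntegrable (fun s => K * τ * (t - s) ^ (-(α + 1))) volume 0 (t - τ) := by
    refine ContinuousOn.intervalIntegrable (continuousOn_const.mul
      ((continuousOn_const.sub continuousOn_id).rpow_const fun s hs => Or.inl ?_))
    rw [uIcc_of_le (by linarith)] at hs
    exact (by linarith [hs.2] : (0:ℝ) < t - s).ne'
  have hg₂ : IntervalIntegrable (fun s => K * (t - s) ^ (-α)) volume (t - τ) t := by
    have := (intervalIntegrable_rpow' (a := τ) (b := 0) (by linarith : -1 < -α)).comp_sub_left t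
    simp only [sub_zero] at this
    exact this.const_mul K
  obtain ⟨hi₁, hb₁⟩ := intervalIntegrable_and_abs_integral_le (by linarith)
    (hmeas le_rfl (by linarith)) hg₁ h₁
  obtain ⟨hi₂, hb₂⟩ := intervalIntegrable_and_abs_integral_le (by linarith)
    (hmeas (by linarith) le_rfl) hg₂ h₂
  have hI₁ : ∫ s in 0..t - τ, K * τ * (t - s) ^ (-(α + 1))
      = K * τ * ((τ ^ (-α) - t ^ (-α)) / α) := by
    rw [intervalIntegral.integral_const_mul, integral_sub_rpow]
    · rw [sub_zero, sub_sub_cancel, neg_add, neg_add_cancel_right, div_neg, ← neg_div, neg_sub]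
    · refine Or.inr ⟨by linarith, ?_⟩
      rw [sub_sub_cancel, sub_zero, uIcc_of_le hτt]
      exact fun h => hτ.not_ge h.1
  have hI₂ : ∫ s in t - τ..t, K * (t - s) ^ (-α) = K * (τ ^ (1 - α) / (1 - α)) := by
    rw [intervalIntegral.integral_const_mul, integral_sub_rpow _ _ _ (Or.inl (by linarith)),
      sub_sub_cancel, sub_self, neg_add_eq_sub, zero_rpow (by linarith), sub_zero]
  refine ⟨hi₁.trans hi₂, ?_⟩
  rw [← integral_add_adjacent_intervals hi₁ hi₂]
  exact (abs_add_le _ _).trans (add_le_add (hb₁.trans_eq hI₁) (hb₂.trans_eq hI₂))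

theorem caputo_sub_caputo (α : ℝ) {u v : ℝ → ℝ} {t : ℝ} (h0 : v 0 = u 0) (ht : v t = u t)
    (hu : IntervalIntegrable (fun s => (u t - u s) / (t - s) ^ (α + 1)) volume 0 t)
    (he : IntervalIntegrable (fun s => (v s - u s) / (t - s) ^ (α + 1)) volume 0 t) :
    caputo α u t - caputo α v t =
      α / Gamma (1 - α) * ∫ s in 0..t, (v s - u s) / (t - s) ^ (α + 1) := by
  have hv : (fun s => (v t - v s) / (t - s) ^ (α + 1)) =
      fun s => (u t - u s) / (t - s) ^ (α + 1) - (v s - u s) / (t - s) ^ (α + 1) := by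
    ext s; rw [ht]; ring
  rw [caputo, caputo, hv, integral_sub hu he, h0, ht]
  ring

theorem intervalIntegrable_caputo_integrand {α L t : ℝ} {u : ℝ → ℝ} (hα : α < 1) (hL : 0 ≤ L)
    (ht : 0 ≤ t) (hu : ContinuousOn u (Icc 0 t)) (hLip : ∀ s ∈ Icc 0 t, |u t - u s| ≤ L * (t - s)) :
    IntervalIntegrable (fun s => (u t - u s) / (t - s) ^ (α + 1)) volume 0 t := by
  have hg : IntervalIntegrable (fun s => L * (t - s) ^ (-α)) volume 0 t := by
    have := (intervalIntegrable_rpow' (a := t) (b := 0) (by linarith : -1 < -α)).comp_sub_left t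
    simp only [sub_self, sub_zero] at this
    exact this.const_mul L
  refine (intervalIntegrable_and_abs_integral_le ht ?_ hg fun s hs =>
    abs_div_rpow_add_one_le hL (by linarith [hs.2]) (hLip s (Ioc_subset_Icc_self hs))).1
  have hnum := ((continuousOn_const (c := u t)).sub hu).aestronglyMeasurable (μ := volume)
    measurableSet_Icc
  exact (hnum.mono_measure (Measure.restrict_mono Ioc_subset_Icc_self le_rfl)).div₀
    ((measurable_const.sub measurable_id).pow_const _).aestronglyMeasurable

theorem abs_div_sub_mul_div_le {M β τ X Y P : ℝ} (hτ : 0 < τ) (hM0 : 0 ≤ M) (hβ1 : β ≤ 1)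
    (hP : 0 ≤ P) (hX : |X| ≤ M * τ ^ β * P) (hY : |Y| ≤ M * (2 * τ) ^ β * (τ * τ)) :
    |X / τ - P * Y / (2 * τ ^ 3)| ≤ 2 * M * τ ^ β * (P / τ) := by
  have h2 : (2 * τ) ^ β ≤ 2 * τ ^ β := by
    rw [mul_rpow zero_le_two hτ.le]
    gcongr
    simpa using rpow_le_rpow_of_exponent_le one_le_two hβ1
  calc |X / τ - P * Y / (2 * τ ^ 3)| ≤ |X| / τ + P * |Y| / (2 * τ ^ 3) := by
        refine (abs_sub _ _).trans_eq ?_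
        rw [abs_div, abs_div, abs_mul, abs_of_pos hτ, abs_of_nonneg hP,
          abs_of_pos (by positivity : (0:ℝ) < 2 * τ ^ 3)]
    _ ≤ M * τ ^ β * P / τ + P * (M * (2 * τ ^ β) * (τ * τ)) / (2 * τ ^ 3) := by
        gcongr
        exact hY.trans (by gcongr)
    _ = 2 * M * τ ^ β * (P / τ) := by
        field_simp
        ring

/-- Newton form of `Π_{2,j} u` about `t_j`, with its divided differences written as cross
differences; `Pi2_sub_eq_left` is the mirror image. -/
theorem Pi2_sub_eq_right {τ : ℝ} (hτ : τ ≠ 0) (u : ℝ → ℝ) (j : ℕ) (s : ℝ) :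
    Pi2 τ u j s - u s =
      ((s - j * τ) * (u ((j + 1) * τ) - u s) - ((j + 1) * τ - s) * (u s - u (j * τ))) / τ
        - ((j + 1) * τ - s) * (s - j * τ) * ((j * τ - (j - 1) * τ) * (u ((j + 1) * τ) - u (j * τ))
          - ((j + 1) * τ - j * τ) * (u (j * τ) - u ((j - 1) * τ))) / (2 * τ ^ 3) := by
  simp only [Pi2]
  field_simp
  ring

theorem Pi2_sub_eq_left {τ : ℝ} (hτ : τ ≠ 0) (u : ℝ → ℝ) (j : ℕ) (s : ℝ) :
    Pi2 τ u j s - u s =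
      ((s - (j - 1) * τ) * (u (j * τ) - u s) - (j * τ - s) * (u s - u ((j - 1) * τ))) / τ
        - (j * τ - s) * (s - (j - 1) * τ) * ((j * τ - (j - 1) * τ) * (u ((j + 1) * τ) - u (j * τ))
          - ((j + 1) * τ - j * τ) * (u (j * τ) - u ((j - 1) * τ))) / (2 * τ ^ 3) := by
  simp only [Pi2]
  field_simp
  ring

theorem L2interp_of_le {τ : ℝ} {u : ℝ → ℝ} {n : ℕ} {s : ℝ} (hs : s ≤ ((n:ℝ) - 1) * τ) :
    L2interp τ u n s = Pi2 τ u ⌈s / τ⌉₊ s :=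
  if_neg hs.not_gt

theorem L2interp_zero {τ : ℝ} (hτ : 0 < τ) (u : ℝ → ℝ) {n : ℕ} (hn : 1 ≤ n) :
    L2interp τ u n 0 = u 0 := by
  rw [L2interp_of_le (mul_nonneg (by simpa using hn) hτ.le), zero_div, Nat.ceil_zero]
  simp only [Pi2, Nat.cast_zero, zero_mul]
  field_simp
  ring

theorem L2interp_self {τ : ℝ} (hτ : 0 < τ) (u : ℝ → ℝ) {n : ℕ} (hn : 1 ≤ n) :
    L2interp τ u n (n * τ) = u (n * τ) := by
  obtain ⟨m, rfl⟩ : ∃ m, n = m + 1 := ⟨n - 1, by omega⟩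
  rw [L2interp, if_pos (by linarith), Nat.add_sub_cancel]
  push_cast
  simp only [Pi2]
  field_simp
  ring

/-- `u` need not be measurable: each `Pi2 τ u j` is a polynomial in `s`, and `j = ⌈s / τ⌉₊` takes
countably many values. -/
theorem measurable_L2interp (τ : ℝ) (u : ℝ → ℝ) (n : ℕ) : Measurable (L2interp τ u n) := by
  have hPi2 : Measurable fun p : ℝ × ℕ => Pi2 τ u p.2 p.1 :=
    measurable_from_prod_countable_left fun j => by simp only [Pi2]; fun_prop
  exact Measurable.ite (measurableSet_lt measurable_const measurable_id)
    (hPi2.comp (measurable_id.prodMk measurable_const))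
    (hPi2.comp (measurable_id.prodMk (measurable_id.div_const τ).nat_ceil))

section Holder

variable {T β M τ : ℝ} {u u' : ℝ → ℝ}
  (hderiv : ∀ t ∈ Icc (0:ℝ) T, HasDerivWithinAt u (u' t) (Icc 0 T) t)
  (hM : holderBnd T β M u') (hM0 : 0 ≤ M) (hβ0 : 0 ≤ β) (hβ1 : β ≤ 1) (hτ : 0 < τ)

include hderiv in
theorem exists_sub_eq_deriv_mul {a b : ℝ} (ha : 0 ≤ a) (hab : a < b) (hb : b ≤ T) :
    ∃ ξ ∈ Ioo a b, u b - u a = u' ξ * (b - a) := by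
  obtain ⟨ξ, hξ, h⟩ := exists_hasDerivAt_eq_slope u u' hab
    (fun x hx => (hderiv x ⟨ha.trans hx.1, hx.2.trans hb⟩).continuousWithinAt.mono
      (Icc_subset_Icc ha hb))
    (fun x hx => (hderiv x ⟨by linarith [hx.1], by linarith [hx.2]⟩).hasDerivAt
      (Icc_mem_nhds (by linarith [hx.1]) (by linarith [hx.2])))
  exact ⟨ξ, hξ, by rw [h, div_mul_cancel₀ _ (sub_pos.2 hab).ne']⟩

include hderiv hM hM0 hβ0 in
theorem abs_sub_le_of_holderBnd {x y : ℝ} (hx : x ∈ Icc 0 T) (hy : y ∈ Icc 0 T) :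
    |u y - u x| ≤ (|u' 0| + M * T ^ β) * |y - x| := by
  have h0 : (0:ℝ) ∈ Icc 0 T := ⟨le_rfl, hx.1.trans hx.2⟩
  have hbound : ∀ z ∈ Icc 0 T, ‖u' z‖ ≤ |u' 0| + M * T ^ β := fun z hz => by
    have hz0 := hM z hz 0 h0
    rw [sub_zero, abs_of_nonneg hz.1] at hz0
    rw [Real.norm_eq_abs]
    linarith [abs_sub_abs_le_abs_sub (u' z) (u' 0),
      mul_le_mul_of_nonneg_left (rpow_le_rpow hz.1 hz.2 hβ0) hM0]
  simpa [Real.norm_eq_abs] using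
    (convex_Icc 0 T).norm_image_sub_le_of_norm_hasDerivWithin_le hderiv hbound hx hy

include hderiv hM hM0 hβ0 in
/-- Both difference quotients are values of `u'`, at points at most `ℓ` apart. -/
theorem abs_cross_sub_le {p ℓ x y z w : ℝ} (hp : 0 ≤ p) (hpℓ : p + ℓ ≤ T) (hx : p ≤ x)
    (hxy : x ≤ y) (hy : y ≤ p + ℓ) (hz : p ≤ z) (hzw : z ≤ w) (hw : w ≤ p + ℓ) :
    |(w - z) * (u y - u x) - (y - x) * (u w - u z)| ≤ M * ℓ ^ β * ((y - x) * (w - z)) := by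
  rcases hxy.eq_or_lt with rfl | hxy
  · simp
  rcases hzw.eq_or_lt with rfl | hzw
  · simp
  obtain ⟨ξ, hξ, hξu⟩ := exists_sub_eq_deriv_mul hderiv (hp.trans hx) hxy (hy.trans hpℓ)
  obtain ⟨η, hη, hηu⟩ := exists_sub_eq_deriv_mul hderiv (hp.trans hz) hzw (hw.trans hpℓ)
  have hdist : |ξ - η| ≤ ℓ :=
    abs_sub_le_iff.2 ⟨by linarith [hξ.2, hη.1], by linarith [hξ.1, hη.2]⟩
  have hholder : |u' ξ - u' η| ≤ M * ℓ ^ β :=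
    (hM ξ ⟨by linarith [hξ.1], by linarith [hξ.2]⟩ η ⟨by linarith [hη.1], by linarith [hη.2]⟩).trans
      (by gcongr)
  have hpos : 0 < (y - x) * (w - z) := mul_pos (sub_pos.2 hxy) (sub_pos.2 hzw)
  rw [hξu, hηu, show (w - z) * (u' ξ * (y - x)) - (y - x) * (u' η * (w - z))
    = (u' ξ - u' η) * ((y - x) * (w - z)) by ring, abs_mul, abs_of_pos hpos]
  exact mul_le_mul_of_nonneg_right hholder hpos.le

include hderiv hM hM0 hβ0 hβ1 hτ in
theorem abs_Pi2_sub_le_right {j : ℕ} (hj : 1 ≤ j) (hjT : (j + 1) * τ ≤ T) {s : ℝ}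
    (hs₁ : j * τ ≤ s) (hs₂ : s ≤ (j + 1) * τ) :
    |Pi2 τ u j s - u s| ≤ 2 * M * τ ^ β * ((j + 1) * τ - s) := by
  have hj' : (1:ℝ) ≤ j := by exact_mod_cast hj
  have ha : 0 ≤ ((j:ℝ) - 1) * τ := mul_nonneg (by linarith) hτ.le
  have hX := abs_cross_sub_le hderiv hM hM0 hβ0 (ℓ := τ) (x := s) (y := (j + 1) * τ) (z := j * τ)
    (w := s) (by linarith) (by linarith) hs₁ (by linarith) (by linarith) le_rfl hs₁ (by linarith)
  have hY := abs_cross_sub_le hderiv hM hM0 hβ0 (ℓ := 2 * τ) (x := j * τ) (y := (j + 1) * τ)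
    (z := (j - 1) * τ) (w := j * τ) ha (by linarith) (by linarith) (by linarith) (by linarith)
    le_rfl (by linarith) (by linarith)
  rw [show ((j + 1) * τ - j * τ) * (j * τ - (j - 1) * τ) = τ * τ by ring] at hY
  rw [Pi2_sub_eq_right hτ.ne']
  refine (abs_div_sub_mul_div_le hτ hM0 hβ1 (by nlinarith) hX hY).trans ?_
  gcongr
  rw [div_le_iff₀ hτ]
  nlinarith

include hderiv hM hM0 hβ0 hβ1 hτ in
theorem abs_Pi2_sub_le_left {j : ℕ} (hj : 1 ≤ j) (hjT : (j + 1) * τ ≤ T) {s : ℝ}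
    (hs₁ : (j - 1) * τ ≤ s) (hs₂ : s ≤ j * τ) :
    |Pi2 τ u j s - u s| ≤ 2 * M * τ ^ β * τ := by
  have hj' : (1:ℝ) ≤ j := by exact_mod_cast hj
  have ha : 0 ≤ ((j:ℝ) - 1) * τ := mul_nonneg (by linarith) hτ.le
  have hX := abs_cross_sub_le hderiv hM hM0 hβ0 (ℓ := τ) (x := s) (y := j * τ) (z := (j - 1) * τ)
    (w := s) ha (by linarith) hs₁ hs₂ (by linarith) le_rfl hs₁ (by linarith)
  have hY := abs_cross_sub_le hderiv hM hM0 hβ0 (ℓ := 2 * τ) (x := j * τ) (y := (j + 1) * τ)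
    (z := (j - 1) * τ) (w := j * τ) ha (by linarith) (by linarith) (by linarith) (by linarith)
    le_rfl (by linarith) (by linarith)
  rw [show ((j + 1) * τ - j * τ) * (j * τ - (j - 1) * τ) = τ * τ by ring] at hY
  rw [Pi2_sub_eq_left hτ.ne']
  refine (abs_div_sub_mul_div_le hτ hM0 hβ1 (by nlinarith) hX hY).trans ?_
  gcongr
  rw [div_le_iff₀ hτ]
  nlinarith

include hderiv hM hM0 hβ0 hβ1 hτ in
theorem abs_L2interp_sub_le_of_le {n : ℕ} (hnT : n * τ ≤ T) {s : ℝ} (hs₀ : 0 < s)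
    (hs : s ≤ ((n:ℝ) - 1) * τ) : |L2interp τ u n s - u s| ≤ 2 * M * τ ^ β * τ := by
  have hsτ : 0 < s / τ := div_pos hs₀ hτ
  have hceil := Nat.ceil_lt_add_one hsτ.le
  have hle := Nat.le_ceil (s / τ)
  rw [L2interp_of_le hs]
  generalize ⌈s / τ⌉₊ = j at hceil hle
  have hj : 1 ≤ j := Nat.cast_pos.1 (hsτ.trans_le hle)
  have hjs : ((j:ℝ) - 1) * τ < s := (lt_div_iff₀ hτ).1 (by linarith)
  have hsj : s ≤ j * τ := (div_le_iff₀ hτ).1 hle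
  have hjn : (j:ℝ) + 1 ≤ n := by
    have : (j:ℝ) < n := by linarith [(div_le_iff₀ hτ).2 hs]
    exact_mod_cast Nat.cast_lt.1 this
  exact abs_Pi2_sub_le_left hderiv hM hM0 hβ0 hβ1 hτ hj
    ((mul_le_mul_of_nonneg_right hjn hτ.le).trans hnT) hjs.le hsj

include hderiv hM hM0 hβ0 hβ1 hτ in
theorem abs_L2interp_sub_le_of_lt {n : ℕ} (hn : 2 ≤ n) (hnT : n * τ ≤ T) {s : ℝ}
    (hs₁ : ((n:ℝ) - 1) * τ < s) (hs₂ : s ≤ n * τ) :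
    |L2interp τ u n s - u s| ≤ 2 * M * τ ^ β * (n * τ - s) := by
  obtain ⟨m, rfl⟩ : ∃ m, n = m + 1 := ⟨n - 1, by omega⟩
  rw [L2interp, if_pos hs₁, Nat.add_sub_cancel]
  push_cast at hnT hs₁ hs₂ ⊢
  exact abs_Pi2_sub_le_right hderiv hM hM0 hβ0 hβ1 hτ (by omega) hnT (by linarith) hs₂

include hderiv hM hM0 hβ0 in
theorem intervalIntegrable_caputo_integrand_of_holderBnd {α t : ℝ} (hα : α < 1) (ht : 0 ≤ t)
    (htT : t ≤ T) : IntervalIntegrable (fun s => (u t - u s) / (t - s) ^ (α + 1)) volume 0 t := by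
  refine intervalIntegrable_caputo_integrand (L := |u' 0| + M * T ^ β) hα
    (add_nonneg (abs_nonneg _) (mul_nonneg hM0 (rpow_nonneg (ht.trans htT) _))) ht
    (fun x hx => ((hderiv x ⟨hx.1, hx.2.trans htT⟩).continuousWithinAt).mono
      (Icc_subset_Icc le_rfl htT)) fun s hs => ?_
  have := abs_sub_le_of_holderBnd hderiv hM hM0 hβ0 ⟨hs.1, hs.2.trans htT⟩ ⟨ht, htT⟩
  rwa [abs_of_nonneg (sub_nonneg.2 hs.2)] at this

include hderiv hM hM0 hβ0 hβ1 hτ in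
theorem abs_integral_L2interp_sub_le {α : ℝ} (hα0 : 0 < α) (hα1 : α < 1) {n : ℕ} (hn : 2 ≤ n)
    (hnT : n * τ ≤ T) :
    IntervalIntegrable (fun s => (L2interp τ u n s - u s) / (n * τ - s) ^ (α + 1))
        volume 0 (n * τ) ∧
      |∫ s in 0..n * τ, (L2interp τ u n s - u s) / (n * τ - s) ^ (α + 1)|
        ≤ 2 * M * τ ^ β * τ * ((τ ^ (-α) - (n * τ) ^ (-α)) / α)
          + 2 * M * τ ^ β * (τ ^ (1 - α) / (1 - α)) := by
  have hτn : τ ≤ n * τ := le_mul_of_one_le_left hτ.le (by exact_mod_cast (by omega : 1 ≤ n))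
  have hu : ContinuousOn u (Icc 0 T) := fun x hx => (hderiv x hx).continuousWithinAt
  refine abs_integral_le_of_two_scale_bound hτ hτn hα0 hα1 ?_ (fun s hs => ?_) (fun s hs => ?_)
  · exact ((measurable_L2interp τ u n).aestronglyMeasurable.sub
      ((hu.aestronglyMeasurable measurableSet_Icc).mono_measure (Measure.restrict_mono
        (Ioc_subset_Icc_self.trans (Icc_subset_Icc le_rfl hnT)) le_rfl))).div₀
      ((measurable_const.sub measurable_id).pow_const _).aestronglyMeasurable
  · have hts : 0 < n * τ - s := by linarith [hs.2]
    rw [abs_div, abs_of_pos (rpow_pos_of_pos hts _), rpow_neg hts.le, div_eq_mul_inv]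
    exact mul_le_mul_of_nonneg_right (abs_L2interp_sub_le_of_le hderiv hM hM0 hβ0 hβ1 hτ hnT
      hs.1 (by linarith [hs.2])) (by positivity)
  · exact abs_div_rpow_add_one_le (by positivity) (by linarith [hs.2])
      (abs_L2interp_sub_le_of_lt hderiv hM hM0 hβ0 hβ1 hτ hn hnT (by linarith [hs.1]) hs.2)

end Holder

theorem L2_error_constant_le {α β M τ : ℝ} {n : ℕ} (hτ : 0 < τ) (hn : 1 ≤ n) (hα0 : 0 < α)
    (hM0 : 0 ≤ M) :
    2 * M * τ ^ β * τ * ((τ ^ (-α) - (n * τ) ^ (-α)) / α)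
        + 2 * M * τ ^ β * (τ ^ (1 - α) / (1 - α))
      ≤ (4 * (1 - (n:ℝ) ^ (-α)) / α + 2 / (1 - α)) * M * τ ^ (1 + β - α) := by
  have hnα : (n:ℝ) ^ (-α) ≤ 1 :=
    rpow_le_one_of_one_le_of_nonpos (by exact_mod_cast hn) (by linarith)
  have hsplit : τ ^ (1 + β - α) = τ ^ β * τ ^ (1 - α) := by rw [← rpow_add hτ]; ring_nf
  have hshift : τ * τ ^ (-α) = τ ^ (1 - α) := by rw [sub_eq_add_neg, rpow_add hτ, rpow_one]
  rw [mul_rpow (Nat.cast_nonneg n) hτ.le, hsplit]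
  calc _ = (2 * (1 - (n:ℝ) ^ (-α)) / α + 2 / (1 - α)) * M * (τ ^ β * τ ^ (1 - α)) := by
        rw [← hshift]; ring
    _ ≤ _ := by gcongr (?_ + _) * _ * _; exact div_le_div_of_nonneg_right (by linarith) hα0.le

theorem stmt7_general (T : ℝ) (hT : 0 < T) (α β : ℝ) (hα0 : 0 < α) (hα1 : α < 1)
    (hβ0 : 0 < β) (hβ1 : β ≤ 1)
    (u u' : ℝ → ℝ)
    (hderiv : ∀ t ∈ Set.Icc (0:ℝ) T, HasDerivWithinAt u (u' t) (Set.Icc 0 T) t)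
    (M : ℝ) (hM0 : 0 ≤ M) (hM : holderBnd T β M u')
    (N : ℕ) (hN : 0 < N) (τ : ℝ) (hτ : τ = T / N)
    (n : ℕ) (hn : 2 ≤ n) (hnN : n ≤ N) :
    |caputo α u ((n:ℝ)*τ) - L2approx α τ u n| ≤
      (α / Real.Gamma (1 - α)) *
        (4 * (1 - (n:ℝ) ^ (-α)) / α + 2 / (1 - α)) * M * τ ^ (1 + β - α) := by
  have hτ0 : 0 < τ := by rw [hτ]; exact div_pos hT (Nat.cast_pos.2 hN)
  have htT : (n:ℝ) * τ ≤ T := by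
    calc (n:ℝ) * τ ≤ N * τ := by gcongr
      _ = T := by rw [hτ]; field_simp
  have hΓ : 0 ≤ α / Gamma (1 - α) := div_nonneg hα0.le (Gamma_pos_of_pos (by linarith)).le
  obtain ⟨he, hbound⟩ := abs_integral_L2interp_sub_le hderiv hM hM0 hβ0.le hβ1 hτ0 hα0 hα1 hn htT
  rw [L2approx, caputo_sub_caputo α (L2interp_zero hτ0 u (by omega))
    (L2interp_self hτ0 u (by omega)) (intervalIntegrable_caputo_integrand_of_holderBnd hderiv hM
      hM0 hβ0.le hα1 (by positivity) htT) he, abs_mul, abs_of_nonneg hΓ]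
  calc _ ≤ α / Gamma (1 - α) *
        ((4 * (1 - (n:ℝ) ^ (-α)) / α + 2 / (1 - α)) * M * τ ^ (1 + β - α)) :=
        mul_le_mul_of_nonneg_left (hbound.trans (L2_error_constant_le hτ0 (by omega) hα0 hM0)) hΓ
    _ = _ := by ring

theorem stmt7 (T : ℝ) (hT : 0 < T) (α β : ℝ) (hα0 : 0 < α) (hα1 : α < 1)
    (hβ0 : 0 < β) (hβ1 : β ≤ 1)
    (u u' : ℝ → ℝ)
    (hderiv : ∀ t ∈ Set.Icc (0:ℝ) T, HasDerivWithinAt u (u' t) (Set.Icc 0 T) t)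
    (hu' : ContinuousOn u' (Set.Icc 0 T))
    (M : ℝ) (hM0 : 0 ≤ M) (hM : holderBnd T β M u')
    (N : ℕ) (hN : 0 < N) (τ : ℝ) (hτ : τ = T / N)
    (n : ℕ) (hn : 2 ≤ n) (hnN : n ≤ N) :
    |caputo α u ((n:ℝ)*τ) - L2approx α τ u n| ≤
      (α / Real.Gamma (1 - α)) *
        (4 * (1 - (n:ℝ) ^ (-α)) / α + 2 / (1 - α)) * M * τ ^ (1 + β - α) :=
  stmt7_general T hT α β hα0 hα1 hβ0 hβ1 u u' hderiv M hM0 hM N hN τ hτ n hn hnN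
end

section
/- Let T > 0, 0 < β ≤ 1, k ≥ 1 an integer, and u ∈ C^{1,β}([0,T]). There exists a constant C > 0 depending only on k and β such that for every N ∈ ℕ with τ = T/N, every integer j with k ≤ j ≤ N, and every s ∈ [t_{j−1}, t_j], |u(s) − Π_{k,j}u(s)| ≤ C (t_j − s) τ^β [u']_{C^{0,β}[0,T]}. -/
/-!
Interpolation of degree `k ≥ 1` reproduces affine functions, so `u(s) - Π_{k,j}u(s)` is the
sum over the nodes of `R_l ℓ_l(s)`, where `ℓ_l` is the Lagrange basis and `R_l` is the error at
`t_{j-l}` of the tangent line of `u` at `s`; by the mean value inequality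
`|R_l| ≤ M |t_{j-l} - s|^β |t_{j-l} - s|`. The last factor combines with `ℓ_l` into the nodal
polynomial: `|(s - t_{j-l}) ℓ_l(s)| = |∏_i (s - t_{j-i})| / ∏_{i ≠ l} |t_{j-l} - t_{j-i}|
≤ (t_j - s) (kτ)^k / τ^k`, and this is where the factor `t_j - s` comes from.
-/

open Set

/-- The degree-`k` Lagrange interpolant `Π_{k,j} u` of `u` at the `k+1` nodes
`t_{j-k}, …, t_j` (with `t_i = iτ`):
`Π_{k,j}u(s) = Σ_{l=0}^{k} u(t_{j-l}) Π_{i≠l} (s - t_{j-i})/(t_{j-l} - t_{j-i})`. -/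
noncomputable def Pik (τ : ℝ) (u : ℝ → ℝ) (k j : ℕ) (s : ℝ) : ℝ :=
  ∑ l ∈ Finset.range (k + 1), u (((j:ℝ) - (l:ℝ)) * τ) *
    ∏ i ∈ (Finset.range (k + 1)).erase l,
      (s - ((j:ℝ) - (i:ℝ)) * τ) / (((j:ℝ) - (l:ℝ)) * τ - ((j:ℝ) - (i:ℝ)) * τ)

open Finset Polynomial
open scoped Interval

namespace Lagrange

variable {ι : Type*} [DecidableEq ι] {s : Finset ι}

section Field

variable {F : Type*} [Field F] {v : ι → F}

theorem eval_basis (i : ι) (x : F) :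
    (Lagrange.basis s v i).eval x = ∏ j ∈ s.erase i, (x - v j) / (v i - v j) := by
  simp only [Lagrange.basis, basisDivisor, eval_prod, eval_mul, eval_C, eval_sub, eval_X,
    div_eq_inv_mul]

theorem eval_eq_sum_eval_mul_eval_basis (hvs : Set.InjOn v s) {f : F[X]} (hf : f.degree < #s)
    (x : F) : f.eval x = ∑ i ∈ s, f.eval (v i) * (Lagrange.basis s v i).eval x := by
  conv_lhs => rw [eq_interpolate hvs hf]
  simp only [interpolate_apply, eval_finsetSum, eval_mul, eval_C]

theorem eval_sub_sum_mul_eval_basis (hvs : Set.InjOn v s) {f : F[X]} (hf : f.degree < #s)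
    (r : ι → F) (x : F) :
    f.eval x - ∑ i ∈ s, r i * (Lagrange.basis s v i).eval x
      = ∑ i ∈ s, (f.eval (v i) - r i) * (Lagrange.basis s v i).eval x := by
  rw [eval_eq_sum_eval_mul_eval_basis hvs hf, ← sum_sub_distrib]
  simp only [sub_mul]

theorem sub_mul_eval_basis {i : ι} (hi : i ∈ s) (x : F) :
    (x - v i) * (Lagrange.basis s v i).eval x
      = (∏ j ∈ s, (x - v j)) / ∏ j ∈ s.erase i, (v i - v j) := by
  rw [eval_basis, prod_div_distrib, ← mul_div_assoc, mul_prod_erase s (fun j => x - v j) hi]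

end Field

section LinearOrderedField

variable {F : Type*} [Field F] [LinearOrder F] [IsStrictOrderedRing F] {v : ι → F}

theorem abs_sub_mul_eval_basis_le {i i₀ : ι} (hi : i ∈ s) (hi₀ : i₀ ∈ s) {x A δ : F}
    (hδ : 0 < δ) (hA : ∀ j ∈ s.erase i₀, |x - v j| ≤ A)
    (hsep : ∀ j ∈ s.erase i, δ ≤ |v i - v j|) :
    |(x - v i) * (Lagrange.basis s v i).eval x| ≤ |x - v i₀| * (A / δ) ^ (#s - 1) := by
  have hnum : |∏ j ∈ s, (x - v j)| ≤ |x - v i₀| * A ^ (#s - 1) := by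
    rw [abs_prod, ← mul_prod_erase s _ hi₀, ← card_erase_of_mem hi₀, ← prod_const]
    gcongr with j hj
    exact hA j hj
  have hden : δ ^ (#s - 1) ≤ |∏ j ∈ s.erase i, (v i - v j)| := by
    rw [abs_prod, ← card_erase_of_mem hi, ← prod_const]
    exact prod_le_prod (fun _ _ => hδ.le) hsep
  rw [sub_mul_eval_basis hi, abs_div, div_pow, ← mul_div_assoc]
  exact div_le_div₀ ((abs_nonneg _).trans hnum) hnum (by positivity) hden

end LinearOrderedField

end Lagrange

theorem abs_sub_sub_mul_le_of_holder {S : Set ℝ} (hS : S.OrdConnected) {u u' : ℝ → ℝ}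
    {M β : ℝ} (hβ : 0 ≤ β) (hM : 0 ≤ M) (hu : ∀ t ∈ S, HasDerivWithinAt u (u' t) S t)
    (hH : ∀ x ∈ S, ∀ y ∈ S, |u' x - u' y| ≤ M * |x - y| ^ β) {x y : ℝ} (hx : x ∈ S)
    (hy : y ∈ S) :
    |u y - u x - u' x * (y - x)| ≤ M * |y - x| ^ β * |y - x| := by
  have hsub : [[x, y]] ⊆ S := hS.uIcc_subset hx hy
  have hderiv : ∀ t ∈ [[x, y]],
      HasDerivWithinAt (fun t => u t - u' x * t) (u' t - u' x) [[x, y]] t := fun t ht =>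
    ((hu t (hsub ht)).mono hsub).sub (((hasDerivWithinAt_id t _).const_mul (u' x)).congr_deriv
      (mul_one _))
  have hbound : ∀ t ∈ [[x, y]], ‖u' t - u' x‖ ≤ M * |y - x| ^ β := fun t ht =>
    calc ‖u' t - u' x‖ ≤ M * |t - x| ^ β := hH t (hsub ht) x hx
      _ ≤ M * |y - x| ^ β := by
        gcongr M * ?_
        exact Real.rpow_le_rpow (abs_nonneg _) (abs_sub_left_of_mem_uIcc ht) hβ
  have := (convex_uIcc x y).norm_image_sub_le_of_norm_hasDerivWithin_le hderiv hbound
    left_mem_uIcc right_mem_uIcc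
  simp only [Real.norm_eq_abs] at this
  convert this using 2
  ring

/-- `gridNode τ j i` is the grid point `t_{j-i}`. -/
def gridNode (τ : ℝ) (j i : ℕ) : ℝ := ((j : ℝ) - i) * τ

theorem Pik_eq_sum_eval_basis (τ : ℝ) (u : ℝ → ℝ) (k j : ℕ) (s : ℝ) :
    Pik τ u k j s = ∑ l ∈ range (k + 1),
      u (gridNode τ j l) * (Lagrange.basis (range (k + 1)) (gridNode τ j) l).eval s := by
  simp only [Pik, Lagrange.eval_basis, gridNode]

theorem gridNode_injective {τ : ℝ} (hτ : τ ≠ 0) (j : ℕ) : Function.Injective (gridNode τ j) :=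
  fun a b h => by simpa [gridNode, hτ] using h

theorem abs_sub_gridNode_le {k j i : ℕ} {τ s : ℝ} (hk : 1 ≤ k) (hi : i ≤ k) (hτ : 0 ≤ τ)
    (hs : s ∈ Set.Icc (((j : ℝ) - 1) * τ) (j * τ)) : |s - gridNode τ j i| ≤ k * τ := by
  have hk' : (1 : ℝ) ≤ k := by exact_mod_cast hk
  have hi' : (i : ℝ) ≤ k := by exact_mod_cast hi
  rw [gridNode, abs_le]
  constructor <;> nlinarith [hs.1, hs.2]

theorem le_abs_gridNode_sub_gridNode {τ : ℝ} (hτ : 0 ≤ τ) (j : ℕ) {i l : ℕ} (h : i ≠ l) :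
    τ ≤ |gridNode τ j l - gridNode τ j i| := by
  have hil : (1 : ℤ) ≤ |(i : ℤ) - l| := Int.one_le_abs (sub_ne_zero.mpr (by exact_mod_cast h))
  rw [gridNode, gridNode, show ((j : ℝ) - l) * τ - (j - i) * τ = ((i : ℝ) - l) * τ by ring,
    abs_mul, abs_of_nonneg hτ]
  exact le_mul_of_one_le_left hτ (by exact_mod_cast hil)

theorem abs_sub_gridNode_mul_eval_basis_le {k j l : ℕ} {τ s : ℝ} (hk : 1 ≤ k) (hl : l ≤ k)
    (hτ : 0 < τ) (hs : s ∈ Set.Icc (((j : ℝ) - 1) * τ) (j * τ)) :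
    |(s - gridNode τ j l) * (Lagrange.basis (range (k + 1)) (gridNode τ j) l).eval s|
      ≤ k ^ k * (j * τ - s) := by
  have := Lagrange.abs_sub_mul_eval_basis_le (s := range (k + 1)) (i₀ := 0) (A := k * τ)
    (mem_range.mpr (Nat.lt_succ_of_le hl)) (by simp) hτ
    (fun i hi => abs_sub_gridNode_le hk (Nat.lt_succ_iff.mp (mem_range.mp (mem_of_mem_erase hi)))
      hτ.le hs)
    (fun i hi => le_abs_gridNode_sub_gridNode hτ.le j (ne_of_mem_erase hi))
  have hD : |s - gridNode τ j 0| = j * τ - s := by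
    rw [abs_sub_comm, abs_of_nonneg] <;> simp only [gridNode, Nat.cast_zero, sub_zero]
    linarith [hs.2]
  rwa [card_range, Nat.add_sub_cancel, mul_div_cancel_right₀ _ hτ.ne', hD,
    mul_comm _ ((k : ℝ) ^ k)] at this

theorem abs_sub_Pik_le {S : Set ℝ} (hS : S.OrdConnected) {u u' : ℝ → ℝ} {M β τ s : ℝ}
    {k j : ℕ} (hk : 1 ≤ k) (hβ : 0 ≤ β) (hM : 0 ≤ M) (hτ : 0 < τ)
    (hu : ∀ t ∈ S, HasDerivWithinAt u (u' t) S t)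
    (hH : ∀ x ∈ S, ∀ y ∈ S, |u' x - u' y| ≤ M * |x - y| ^ β)
    (hnodes : ∀ i ≤ k, gridNode τ j i ∈ S) (hs : s ∈ Set.Icc (((j : ℝ) - 1) * τ) (j * τ)) :
    |u s - Pik τ u k j s| ≤ (k + 1) * (k ^ k * k ^ β) * (j * τ - s) * τ ^ β * M := by
  set L : ℕ → ℝ := fun l => (Lagrange.basis (range (k + 1)) (gridNode τ j) l).eval s
  have hsS : s ∈ S := hS.out (hnodes 1 hk) (hnodes 0 k.zero_le) <| by
    simpa only [gridNode, Nat.cast_one, Nat.cast_zero, sub_zero] using hs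
  set f : ℝ[X] := C (u s) + C (u' s) * (X - C s)
  have hf : f.degree < #(range (k + 1)) := by
    rw [card_range]
    calc f.degree ≤ 1 := by simp only [f]; compute_degree
      _ < ↑(k + 1) := by exact_mod_cast Nat.lt_succ_of_le hk
  have herr : u s - Pik τ u k j s = ∑ l ∈ range (k + 1),
      (u s + u' s * (gridNode τ j l - s) - u (gridNode τ j l)) * L l := by
    have := Lagrange.eval_sub_sum_mul_eval_basis ((gridNode_injective hτ.ne' j).injOn) hf
      (fun l => u (gridNode τ j l)) s
    simpa [f, Pik_eq_sum_eval_basis] using this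
  have hterm : ∀ l ∈ range (k + 1),
      |(u s + u' s * (gridNode τ j l - s) - u (gridNode τ j l)) * L l|
        ≤ k ^ k * k ^ β * (j * τ - s) * τ ^ β * M := by
    intro l hl
    have hlk : l ≤ k := Nat.lt_succ_iff.mp (mem_range.mp hl)
    have hdist : |gridNode τ j l - s| ≤ k * τ := by
      rw [abs_sub_comm]; exact abs_sub_gridNode_le hk hlk hτ.le hs
    have htaylor := abs_sub_sub_mul_le_of_holder hS hβ hM hu hH hsS (hnodes l hlk)
    have hnodal := abs_sub_gridNode_mul_eval_basis_le hk hlk hτ hs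
    calc |(u s + u' s * (gridNode τ j l - s) - u (gridNode τ j l)) * L l|
        = |u (gridNode τ j l) - u s - u' s * (gridNode τ j l - s)| * |L l| := by
          rw [abs_mul, ← abs_neg]; ring_nf
      _ ≤ M * |gridNode τ j l - s| ^ β * |gridNode τ j l - s| * |L l| := by gcongr
      _ ≤ M * (k * τ) ^ β * |(s - gridNode τ j l) * L l| := by
          rw [abs_mul, abs_sub_comm s, ← mul_assoc]
          gcongr
      _ ≤ M * (k * τ) ^ β * (k ^ k * (j * τ - s)) := by gcongr
      _ = k ^ k * k ^ β * (j * τ - s) * τ ^ β * M := by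
          rw [Real.mul_rpow (Nat.cast_nonneg k) hτ.le]; ring
  calc |u s - Pik τ u k j s|
      ≤ ∑ l ∈ range (k + 1),
          |(u s + u' s * (gridNode τ j l - s) - u (gridNode τ j l)) * L l| := by
        rw [herr]
        exact abs_sum_le_sum_abs _ _
    _ ≤ ∑ l ∈ range (k + 1), k ^ k * k ^ β * (j * τ - s) * τ ^ β * M := sum_le_sum hterm
    _ = (k + 1) * (k ^ k * k ^ β) * (j * τ - s) * τ ^ β * M := by
        rw [sum_const, card_range, nsmul_eq_mul]; push_cast; ring

theorem stmt12_general (k : ℕ) (hk : 1 ≤ k) (β : ℝ) (hβ0 : 0 < β) :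
    ∃ C > 0, ∀ T : ℝ, 0 < T → ∀ u u' : ℝ → ℝ,
      (∀ t ∈ Set.Icc (0:ℝ) T, HasDerivWithinAt u (u' t) (Set.Icc 0 T) t) →
      ContinuousOn u' (Set.Icc 0 T) →
      ∀ M : ℝ, 0 ≤ M → holderBnd T β M u' →
        ∀ N : ℕ, 0 < N → ∀ τ : ℝ, τ = T / N →
          ∀ j : ℕ, k ≤ j → j ≤ N →
            ∀ s ∈ Set.Icc (((j:ℝ)-1)*τ) ((j:ℝ)*τ),
              |u s - Pik τ u k j s| ≤ C * ((j:ℝ)*τ - s) * τ ^ β * M := by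
  refine ⟨(k + 1) * (k ^ k * k ^ β), by positivity, ?_⟩
  intro T hT u u' hu _ M hM hH N hN τ hτ j hjk hjN s hs
  have hN' : (0 : ℝ) < N := by exact_mod_cast hN
  have hτ0 : 0 < τ := hτ ▸ div_pos hT hN'
  have hnodes : ∀ i ≤ k, gridNode τ j i ∈ Set.Icc 0 T := fun i hi => by
    have hij : (i : ℝ) ≤ j := by exact_mod_cast hi.trans hjk
    have hjN' : (j : ℝ) ≤ N := by exact_mod_cast hjN
    refine ⟨mul_nonneg (by linarith) hτ0.le, ?_⟩
    calc gridNode τ j i ≤ N * τ := by unfold gridNode; gcongr; linarith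
      _ = T := by rw [hτ, mul_div_cancel₀ T hN'.ne']
  exact abs_sub_Pik_le Set.ordConnected_Icc hk hβ0.le hM hτ0 hu hH hnodes hs

theorem stmt12 (k : ℕ) (hk : 1 ≤ k) (β : ℝ) (hβ0 : 0 < β) (hβ1 : β ≤ 1) :
    ∃ C > 0, ∀ T : ℝ, 0 < T → ∀ u u' : ℝ → ℝ,
      (∀ t ∈ Set.Icc (0:ℝ) T, HasDerivWithinAt u (u' t) (Set.Icc 0 T) t) →
      ContinuousOn u' (Set.Icc 0 T) →
      ∀ M : ℝ, 0 ≤ M → holderBnd T β M u' →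
        ∀ N : ℕ, 0 < N → ∀ τ : ℝ, τ = T / N →
          ∀ j : ℕ, k ≤ j → j ≤ N →
            ∀ s ∈ Set.Icc (((j:ℝ)-1)*τ) ((j:ℝ)*τ),
              |u s - Pik τ u k j s| ≤ C * ((j:ℝ)*τ - s) * τ ^ β * M :=
  stmt12_general k hk β hβ0
end

section
/- Let T > 0, 0 < β ≤ 1, and let k, m be integers with 2 ≤ m ≤ k. Let u ∈ C^{m,β}([0,T]). There exists a constant C > 0 depending only on u, k, m, β and T (but not on τ, j or s) such that for every N ∈ ℕ with τ = T/N, every integer j with k ≤ j ≤ N, and every s ∈ [t_{j−1}, t_j], |u(s) − Π_{k,j}u(s)| ≤ C (t_j − s) ( τ^{m−1+β} [u^{(m)}]_{C^{0,β}[0,T]} + τ^m ). -/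
/-!
Let `P` be the degree-`m` Taylor polynomial of `u` at `t_j`. The Lagrange form of the remainder
and the Hölder bound on `u⁽ᵐ⁾` give `|u x - P x| ≤ M |x - t_j|^(m+β)`. Since `m ≤ k`, the
interpolant reproduces `P`, so the error is `r s - Π_{k,j} r s` for `r = u - P`. Here
`|r s| ≤ M (t_j - s)^(m+β) ≤ M (t_j - s) τ^(m-1+β)`, and because `r t_j = 0` only the basis
functions of the nodes `t_{j-l}`, `l ≥ 1`, contribute: each contains the factor
`(s - t_j)/(t_{j-l} - t_j) = O((t_j - s)/τ)` and meets `|r t_{j-l}| = O(M τ^(m+β))`.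
-/

open Set

open Polynomial
open scoped Nat

theorem iteratedDerivWithin_subset {𝕜 F : Type*} [NontriviallyNormedField 𝕜]
    [NormedAddCommGroup F] [NormedSpace 𝕜 F] {f : 𝕜 → F} {s t : Set 𝕜} {x : 𝕜} {n : ℕ}
    (st : s ⊆ t) (hs : UniqueDiffOn 𝕜 s) (ht : UniqueDiffOn 𝕜 t) (hf : ContDiffOn 𝕜 n f t)
    (hx : x ∈ s) : iteratedDerivWithin n f s x = iteratedDerivWithin n f t x := by
  simp only [iteratedDerivWithin_eq_iteratedFDerivWithin,
    iteratedFDerivWithin_subset st hs ht hf hx]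

theorem taylorWithinEval_subset {E : Type*} [NormedAddCommGroup E] [NormedSpace ℝ E]
    {f : ℝ → E} {s t : Set ℝ} {x₀ : ℝ} {n : ℕ} (st : s ⊆ t) (hs : UniqueDiffOn ℝ s)
    (ht : UniqueDiffOn ℝ t) (hf : ContDiffOn ℝ n f t) (hx₀ : x₀ ∈ s) (x : ℝ) :
    taylorWithinEval f n s x₀ x = taylorWithinEval f n t x₀ x := by
  simp only [taylor_within_apply]
  refine Finset.sum_congr rfl fun i hi => ?_
  have hin : i ≤ n := Nat.lt_succ_iff.1 (Finset.mem_range.1 hi)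
  rw [iteratedDerivWithin_subset st hs ht (hf.of_le (by exact_mod_cast hin)) hx₀]

theorem abs_sub_taylorWithinEval_le_of_holder {f : ℝ → ℝ} {n : ℕ} {A B β M x₀ x : ℝ}
    (hf : ContDiffOn ℝ (n + 1) f (Icc A B)) (hβ : 0 ≤ β) (hM : 0 ≤ M)
    (hhold : ∀ y ∈ Icc A B, |iteratedDerivWithin (n + 1) f (Icc A B) y -
      iteratedDerivWithin (n + 1) f (Icc A B) x₀| ≤ M * |y - x₀| ^ β)
    (hx₀ : x₀ ∈ Icc A B) (hx : x ∈ Icc A B) :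
    |f x - taylorWithinEval f (n + 1) (Icc A B) x₀ x| ≤
      M * |x - x₀| ^ β * |x - x₀| ^ (n + 1) / (n + 1)! := by
  rcases eq_or_ne x₀ x with rfl | hne
  · simp [taylorWithinEval_self]
  set g := iteratedDerivWithin (n + 1) f (Icc A B)
  have hsub : uIcc x₀ x ⊆ Icc A B := uIcc_subset_Icc hx₀ hx
  have hu : UniqueDiffOn ℝ (uIcc x₀ x) := uniqueDiffOn_uIcc hne
  have hAB : UniqueDiffOn ℝ (Icc A B) := uniqueDiffOn_Icc <| by
    rcases hne.lt_or_gt with h | h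
    exacts [hx₀.1.trans_lt (h.trans_le hx.2), hx.1.trans_lt (h.trans_le hx₀.2)]
  have hf' : ContDiffOn ℝ (n + 1) f (uIcc x₀ x) := hf.mono hsub
  obtain ⟨ξ, hξ, hrem⟩ := taylor_mean_remainder_lagrange (n := n) hne
    (hf'.of_le (by norm_cast; simp))
    ((hf'.differentiableOn_iteratedDerivWithin (by norm_cast; simp) hu).mono uIoo_subset_uIcc_self)
  have hξ' : ξ ∈ uIcc x₀ x := uIoo_subset_uIcc_self hξ
  rw [iteratedDerivWithin_subset hsub hu hAB hf hξ',
    taylorWithinEval_subset hsub hu hAB (hf.of_le (by norm_cast; simp)) left_mem_uIcc] at hrem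
  have hremainder : f x - taylorWithinEval f (n + 1) (Icc A B) x₀ x =
      (g ξ - g x₀) * (x - x₀) ^ (n + 1) / (n + 1)! := by
    rw [taylorWithinEval_succ, smul_eq_mul, ← sub_sub, hrem]
    push_cast [Nat.factorial_succ]
    ring
  have hgξ : |g ξ - g x₀| ≤ M * |x - x₀| ^ β :=
    (hhold ξ (hsub hξ')).trans <| mul_le_mul_of_nonneg_left
      (Real.rpow_le_rpow (abs_nonneg _) (abs_sub_left_of_mem_uIcc hξ') hβ) hM
  rw [hremainder, abs_div, abs_mul, abs_pow, Nat.abs_cast]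
  gcongr

noncomputable def taylorPolynomial (f : ℝ → ℝ) (n : ℕ) (s : Set ℝ) (x₀ : ℝ) : ℝ[X] :=
  ∑ i ∈ Finset.range (n + 1), C (iteratedDerivWithin i f s x₀ / i !) * (X - C x₀) ^ i

theorem eval_taylorPolynomial (f : ℝ → ℝ) (n : ℕ) (s : Set ℝ) (x₀ x : ℝ) :
    (taylorPolynomial f n s x₀).eval x = taylorWithinEval f n s x₀ x := by
  simp only [taylorPolynomial, taylor_within_apply, eval_finsetSum, eval_mul, eval_C, eval_pow,
    eval_sub, eval_X, smul_eq_mul]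
  exact Finset.sum_congr rfl fun i _ => by ring

theorem natDegree_taylorPolynomial_le (f : ℝ → ℝ) (n : ℕ) (s : Set ℝ) (x₀ : ℝ) :
    (taylorPolynomial f n s x₀).natDegree ≤ n :=
  natDegree_sum_le_of_forall_le _ _ fun i hi => (natDegree_C_mul_le _ _).trans <|
    (natDegree_pow_le_of_le i (natDegree_X_sub_C_le x₀)).trans <| by
      simpa using Nat.lt_succ_iff.1 (Finset.mem_range.1 hi)

theorem abs_sub_taylorPolynomial_le {T β M c x : ℝ} {n : ℕ} {u : ℝ → ℝ} (hβ : 0 ≤ β)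
    (hM : 0 ≤ M) (hu : ContDiffOn ℝ (n + 1) u (Icc 0 T))
    (hhold : holderBnd T β M (iteratedDerivWithin (n + 1) u (Icc 0 T)))
    (hc : c ∈ Icc 0 T) (hx : x ∈ Icc 0 T) :
    |u x - (taylorPolynomial u (n + 1) (Icc 0 T) c).eval x| ≤
      M * |x - c| ^ β * |x - c| ^ (n + 1) := by
  rw [eval_taylorPolynomial]
  refine (abs_sub_taylorWithinEval_le_of_holder hu hβ hM (fun y hy => hhold y hy c hc) hc
    hx).trans (div_le_self (by positivity) ?_)
  exact_mod_cast (n + 1).factorial_pos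

noncomputable def gridBasis (τ : ℝ) (k j l : ℕ) (s : ℝ) : ℝ :=
  ∏ i ∈ (Finset.range (k + 1)).erase l,
    (s - ((j:ℝ) - (i:ℝ)) * τ) / (((j:ℝ) - (l:ℝ)) * τ - ((j:ℝ) - (i:ℝ)) * τ)

theorem Pik_eq_sum_gridBasis (τ : ℝ) (u : ℝ → ℝ) (k j : ℕ) (s : ℝ) :
    Pik τ u k j s = ∑ l ∈ Finset.range (k + 1), u ((j - l) * τ) * gridBasis τ k j l s :=
  rfl

theorem Pik_sub (τ : ℝ) (u v : ℝ → ℝ) (k j : ℕ) (s : ℝ) :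
    Pik τ (u - v) k j s = Pik τ u k j s - Pik τ v k j s := by
  simp only [Pik_eq_sum_gridBasis, Pi.sub_apply, sub_mul, Finset.sum_sub_distrib]

theorem Pik_polynomial_eval {τ : ℝ} (hτ : τ ≠ 0) {k : ℕ} {P : ℝ[X]} (hP : P.natDegree ≤ k)
    (j : ℕ) (s : ℝ) : Pik τ (fun x => P.eval x) k j s = P.eval s := by
  set v : ℕ → ℝ := fun i => ((j:ℝ) - i) * τ
  have hv : Set.InjOn v (Finset.range (k + 1)) := fun i _ i' _ h => by
    simpa [v, hτ] using h
  have hdeg : P.degree < (Finset.range (k + 1)).card := by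
    rw [Finset.card_range]
    exact degree_le_natDegree.trans_lt (by exact_mod_cast Nat.lt_succ_of_le hP)
  conv_rhs => rw [Lagrange.eq_interpolate hv hdeg]
  simp [Lagrange.interpolate_apply, eval_finsetSum, Lagrange.basis, Lagrange.basisDivisor,
    eval_prod, Pik_eq_sum_gridBasis, gridBasis, v, div_eq_inv_mul]

theorem sub_Pik_eq_sub_Pik_sub_polynomial {τ : ℝ} (hτ : τ ≠ 0) {k : ℕ} {P : ℝ[X]}
    (hP : P.natDegree ≤ k) (u : ℝ → ℝ) (j : ℕ) (s : ℝ) :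
    u s - Pik τ u k j s =
      (u - fun x => P.eval x) s - Pik τ (u - fun x => P.eval x) k j s := by
  rw [Pik_sub, Pik_polynomial_eval hτ hP, Pi.sub_apply]
  ring

-- In the variable `θ = (t_j - s) / τ` the node `t_{j-i}` becomes `i`.
theorem gridBasis_eq_prod {τ : ℝ} (hτ : τ ≠ 0) (k j l : ℕ) (s : ℝ) :
    gridBasis τ k j l s =
      ∏ i ∈ (Finset.range (k + 1)).erase l, ((j * τ - s) / τ - i) / ((l:ℝ) - i) := by
  refine Finset.prod_congr rfl fun i hi => ?_
  have hil : (i:ℝ) - l ≠ 0 := sub_ne_zero.2 (by exact_mod_cast Finset.ne_of_mem_erase hi)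
  rw [show ((j:ℝ) - l) * τ - (j - i) * τ = (i - l) * τ by ring,
    show (l:ℝ) - i = -(i - l) by ring]
  field_simp
  ring

theorem one_le_abs_natCast_sub_natCast {a b : ℕ} (h : a ≠ b) : 1 ≤ |(a:ℝ) - b| := by
  have := Int.one_le_abs (sub_ne_zero.2 (Int.natCast_inj.not.2 h))
  exact_mod_cast this

theorem abs_gridBasis_le {τ : ℝ} (hτ : 0 < τ) {k j l : ℕ} (hl0 : l ≠ 0) (hlk : l ≤ k) {s : ℝ}
    (hs : s ∈ Icc ((j - 1) * τ) (j * τ)) :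
    |gridBasis τ k j l s| ≤ k ^ (k - 1) * ((j * τ - s) / τ) := by
  set θ := (j * τ - s) / τ
  have hθ0 : 0 ≤ θ := div_nonneg (by linarith [hs.2]) hτ.le
  have hθ1 : θ ≤ 1 := (div_le_one hτ).2 (by linarith [hs.1])
  have hl : l ∈ Finset.range (k + 1) := Finset.mem_range.2 (Nat.lt_succ_of_le hlk)
  have h0 : 0 ∈ (Finset.range (k + 1)).erase l := Finset.mem_erase.2 ⟨hl0.symm, by simp⟩
  have hfirst : |(θ - (0:ℕ)) / ((l:ℝ) - (0:ℕ))| ≤ θ := by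
    have : (1:ℝ) ≤ l := by exact_mod_cast Nat.one_le_iff_ne_zero.2 hl0
    rw [Nat.cast_zero, sub_zero, sub_zero, abs_div, abs_of_nonneg hθ0, abs_of_pos (by linarith)]
    exact div_le_self hθ0 this
  have hfactor : ∀ i ∈ ((Finset.range (k + 1)).erase l).erase 0,
      |(θ - i) / ((l:ℝ) - i)| ≤ k := by
    intro i hi
    obtain ⟨hi0, hil, hik⟩ : i ≠ 0 ∧ i ≠ l ∧ i < k + 1 := by simpa using hi
    have hi1 : (1:ℝ) ≤ i := by exact_mod_cast Nat.one_le_iff_ne_zero.2 hi0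
    have hik' : (i:ℝ) ≤ k := by exact_mod_cast Nat.lt_succ_iff.1 hik
    rw [abs_div, abs_of_nonpos (by linarith)]
    refine div_le_of_le_mul₀ (abs_nonneg _) (by positivity) ?_
    nlinarith [one_le_abs_natCast_sub_natCast (Ne.symm hil)]
  have hcard : (((Finset.range (k + 1)).erase l).erase 0).card = k - 1 := by
    rw [Finset.card_erase_of_mem h0, Finset.card_erase_of_mem hl, Finset.card_range]
    omega
  have hrest : ∏ i ∈ ((Finset.range (k + 1)).erase l).erase 0, |(θ - i) / ((l:ℝ) - i)| ≤
      k ^ (k - 1) := by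
    rw [← hcard, ← Finset.prod_const]
    exact Finset.prod_le_prod (fun _ _ => abs_nonneg _) hfactor
  rw [gridBasis_eq_prod hτ.ne', ← Finset.mul_prod_erase _ _ h0, abs_mul, Finset.abs_prod,
    mul_comm]
  exact mul_le_mul hrest hfirst (abs_nonneg _) (by positivity)

theorem abs_Pik_le_of_eq_zero {τ : ℝ} (hτ : 0 < τ) {k j : ℕ} (hk : k ≠ 0) {s : ℝ}
    (hs : s ∈ Icc ((j - 1) * τ) (j * τ)) {r : ℝ → ℝ} (hr : r (j * τ) = 0) {R : ℝ}
    (hR : ∀ l ∈ Icc 1 k, |r ((j - l) * τ)| ≤ R) :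
    |Pik τ r k j s| ≤ k ^ k * R * ((j * τ - s) / τ) := by
  rw [Pik_eq_sum_gridBasis, Finset.sum_range_succ']
  simp only [Nat.cast_zero, sub_zero, hr, zero_mul, add_zero]
  have hterm : ∀ l ∈ Finset.range k, |r ((j - (l + 1 : ℕ)) * τ) * gridBasis τ k j (l + 1) s| ≤
      R * (k ^ (k - 1) * ((j * τ - s) / τ)) := by
    intro l hl
    have hlk : l + 1 ≤ k := Finset.mem_range.1 hl
    have hrl := hR (l + 1) ⟨by omega, hlk⟩
    rw [abs_mul]
    exact mul_le_mul hrl (abs_gridBasis_le hτ l.succ_ne_zero hlk hs) (abs_nonneg _)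
      ((abs_nonneg _).trans hrl)
  calc _ ≤ ∑ l ∈ Finset.range k, |r ((j - (l + 1 : ℕ)) * τ) * gridBasis τ k j (l + 1) s| :=
        Finset.abs_sum_le_sum_abs _ _
    _ ≤ k * (R * (k ^ (k - 1) * ((j * τ - s) / τ))) := by
        simpa using Finset.sum_le_sum hterm
    _ = k ^ k * R * ((j * τ - s) / τ) := by
        rw [← mul_pow_sub_one hk (k : ℝ)]
        ring

theorem abs_sub_Pik_le_s13 {T τ β M : ℝ} {k m j : ℕ} {u : ℝ → ℝ} (hτ : 0 < τ) (hβ : 0 ≤ β)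
    (hM : 0 ≤ M) (hm : 1 ≤ m) (hmk : m ≤ k) (hkj : k ≤ j) (hjT : j * τ ≤ T)
    (hu : ContDiffOn ℝ m u (Icc 0 T))
    (hhold : holderBnd T β M (iteratedDerivWithin m u (Icc 0 T))) {s : ℝ}
    (hs : s ∈ Icc ((j - 1) * τ) (j * τ)) :
    |u s - Pik τ u k j s| ≤
      (1 + k ^ k * k ^ m * k ^ β) * (j * τ - s) * (τ ^ ((m:ℝ) - 1 + β) * M) := by
  obtain ⟨n, rfl⟩ : ∃ n, m = n + 1 := ⟨m - 1, by omega⟩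
  have hj : (1:ℝ) ≤ j := by exact_mod_cast (show 1 ≤ j by omega)
  have hc : (j:ℝ) * τ ∈ Icc 0 T := ⟨by positivity, hjT⟩
  have hcs : 0 ≤ j * τ - s := by linarith [hs.2]
  have hsT : s ∈ Icc 0 T := ⟨by nlinarith [hs.1], hs.2.trans hjT⟩
  set P := taylorPolynomial u (n + 1) (Icc 0 T) (j * τ)
  set r : ℝ → ℝ := u - fun x => P.eval x
  have hr : ∀ x ∈ Icc 0 T, |r x| ≤ M * |x - j * τ| ^ β * |x - j * τ| ^ (n + 1) :=
    fun x hx => abs_sub_taylorPolynomial_le hβ hM (by exact_mod_cast hu) hhold hc hx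
  have hrc : r (j * τ) = 0 := by
    simp [r, P, eval_taylorPolynomial, taylorWithinEval_self]
  have herr : u s - Pik τ u k j s = r s - Pik τ r k j s :=
    sub_Pik_eq_sub_Pik_sub_polynomial hτ.ne' ((natDegree_taylorPolynomial_le ..).trans hmk) u j s
  have hτpow : τ ^ β * τ ^ n = τ ^ (((n + 1 : ℕ) : ℝ) - 1 + β) := by
    rw [← Real.rpow_natCast, ← Real.rpow_add hτ]
    push_cast
    ring_nf
  have hrs : |r s| ≤ (j * τ - s) * (τ ^ (((n + 1 : ℕ) : ℝ) - 1 + β) * M) := by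
    have hcsτ : j * τ - s ≤ τ := by linarith [hs.1]
    calc |r s| ≤ M * (j * τ - s) ^ β * (j * τ - s) ^ (n + 1) := by
          simpa [abs_sub_comm s, abs_of_nonneg hcs] using hr s hsT
      _ ≤ M * τ ^ β * (τ ^ n * (j * τ - s)) := by
          rw [pow_succ]
          gcongr
      _ = _ := by rw [← hτpow]; ring
  have hnodes : ∀ l ∈ Icc 1 k, |r ((j - l) * τ)| ≤ M * (k * τ) ^ β * (k * τ) ^ (n + 1) := by
    intro l hl
    have hlk : (l:ℝ) ≤ k := by exact_mod_cast hl.2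
    have hkj' : (k:ℝ) ≤ j := by exact_mod_cast hkj
    have hdist : |(j - l) * τ - j * τ| = l * τ := by
      rw [show ((j:ℝ) - l) * τ - j * τ = -(l * τ) by ring, abs_neg, abs_of_nonneg (by positivity)]
    refine (hr _ ⟨by nlinarith, by nlinarith [hc.2]⟩).trans ?_
    rw [hdist]
    gcongr
  have hPik := abs_Pik_le_of_eq_zero hτ (by omega) hs hrc hnodes
  calc |u s - Pik τ u k j s| ≤ |r s| + |Pik τ r k j s| := herr ▸ abs_sub _ _
    _ ≤ (j * τ - s) * (τ ^ (((n + 1 : ℕ) : ℝ) - 1 + β) * M) +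
        k ^ k * (M * (k * τ) ^ β * (k * τ) ^ (n + 1)) * ((j * τ - s) / τ) := add_le_add hrs hPik
    _ = _ := by
        rw [← hτpow, Real.mul_rpow (by positivity) hτ.le, mul_pow, pow_succ τ]
        field_simp

theorem stmt13_general (T : ℝ) (hT : 0 < T) (β : ℝ) (hβ0 : 0 < β)
    (k m : ℕ) (hm2 : 2 ≤ m) (hmk : m ≤ k)
    (u : ℝ → ℝ) (hreg : ContDiffOn ℝ m u (Set.Icc 0 T)) :
    ∃ C > 0, ∀ M : ℝ, 0 ≤ M →
      holderBnd T β M (iteratedDerivWithin m u (Set.Icc 0 T)) →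
      ∀ N : ℕ, 0 < N → ∀ τ : ℝ, τ = T / N →
        ∀ j : ℕ, k ≤ j → j ≤ N →
          ∀ s ∈ Set.Icc (((j:ℝ)-1)*τ) ((j:ℝ)*τ),
            |u s - Pik τ u k j s| ≤
              C * ((j:ℝ)*τ - s) * (τ ^ ((m:ℝ) - 1 + β) * M + τ ^ (m:ℕ)) := by
  refine ⟨1 + k ^ k * k ^ m * k ^ β, by positivity, ?_⟩
  intro M hM hhold N hN τ hτ j hkj hjN s hs
  have hτ0 : 0 < τ := hτ ▸ div_pos hT (by exact_mod_cast hN)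
  have hNτ : (N:ℝ) * τ = T := by rw [hτ]; field_simp
  have hjT : j * τ ≤ T := hNτ ▸ mul_le_mul_of_nonneg_right (by exact_mod_cast hjN) hτ0.le
  refine (abs_sub_Pik_le_s13 hτ0 hβ0.le hM (by omega) hmk hkj hjT hreg hhold hs).trans ?_
  have hcs : 0 ≤ j * τ - s := by linarith [hs.2]
  gcongr
  exact le_add_of_nonneg_right (by positivity)

theorem stmt13 (T : ℝ) (hT : 0 < T) (β : ℝ) (hβ0 : 0 < β) (hβ1 : β ≤ 1)
    (k m : ℕ) (hm2 : 2 ≤ m) (hmk : m ≤ k)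
    (u : ℝ → ℝ) (hreg : ContDiffOn ℝ m u (Set.Icc 0 T)) :
    ∃ C > 0, ∀ M : ℝ, 0 ≤ M →
      holderBnd T β M (iteratedDerivWithin m u (Set.Icc 0 T)) →
      ∀ N : ℕ, 0 < N → ∀ τ : ℝ, τ = T / N →
        ∀ j : ℕ, k ≤ j → j ≤ N →
          ∀ s ∈ Set.Icc (((j:ℝ)-1)*τ) ((j:ℝ)*τ),
            |u s - Pik τ u k j s| ≤
              C * ((j:ℝ)*τ - s) * (τ ^ ((m:ℝ) - 1 + β) * M + τ ^ (m:ℕ)) :=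
  stmt13_general T hT β hβ0 k m hm2 hmk u hreg
end
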